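/- arXiv:math/0602061 — 4 statements merged into one kernel-verified Lean document; each statement's English description precedes it below -/
import Mathlib

section
/- Geometric observation model: let Γ be a weighted digraph with Kirchhoff matrix L, let α > 0 be such that P = I − αL is a stochastic matrix (a Markov chain related to Γ), let τ > 0, and set q = (τ/α + 1)^{−1} ∈ (0,1). Then the series Σ_{k=0}^{∞} q(1−q)^k P^k converges and its sum equals (I + τL)^{−1}; that is, the matrix of unconditional transition probabilities of the chain observed at a geometrically distributed random time with success probability q equals the normalized matrix of out forests Q(τ) = (I + τL)^{−1}. -/
open Matrix BigOperators Filter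

attribute [local instance] Matrix.linftyOpNormedRing Matrix.linftyOpNormedAlgebra

/-- An out forest of the weighted digraph with arc-weight matrix `ε`:
a set of arcs (pairs with positive weight), every vertex has at most one
incoming arc, and there is no directed cycle. -/
def IsOutForest {n : ℕ} (ε : Fin n → Fin n → ℝ) (F : Finset (Fin n × Fin n)) : Prop :=
  (∀ p ∈ F, 0 < ε p.1 p.2) ∧
  (∀ u u' v : Fin n, (u, v) ∈ F → (u', v) ∈ F → u = u') ∧
  ¬ ∃ (k : ℕ) (f : ℕ → Fin n), 0 < k ∧ f 0 = f k ∧ ∀ i < k, (f i, f (i + 1)) ∈ F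

/-- The weight of a forest: the product of the weights of its arcs. -/
noncomputable def forestWeight {n : ℕ} (ε : Fin n → Fin n → ℝ)
    (F : Finset (Fin n × Fin n)) : ℝ :=
  ∏ p ∈ F, ε p.1 p.2

/-- `σ_k`: the total weight of the out forests with exactly `k` arcs. -/
noncomputable def sigmaW {n : ℕ} (ε : Fin n → Fin n → ℝ) (k : ℕ) : ℝ :=
  ∑ᶠ F ∈ {F : Finset (Fin n × Fin n) | IsOutForest ε F ∧ F.card = k}, forestWeight ε F

/-- `Q_k`: the matrix whose `(i,j)` entry is the total weight of out forests with `k`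
arcs in which `j` has no incoming arc and `i` is reachable from `j` along arcs of `F`. -/
noncomputable def QMat {n : ℕ} (ε : Fin n → Fin n → ℝ) (k : ℕ) :
    Matrix (Fin n) (Fin n) ℝ :=
  Matrix.of fun i j =>
    ∑ᶠ F ∈ {F : Finset (Fin n × Fin n) | IsOutForest ε F ∧ F.card = k ∧
        (∀ u, (u, j) ∉ F) ∧ Relation.ReflTransGen (fun a b => (a, b) ∈ F) j i},
      forestWeight ε F

/-- `n − v`: the maximum number of arcs in an out forest. -/
noncomputable def maxForestCard {n : ℕ} (ε : Fin n → Fin n → ℝ) : ℕ :=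
  sSup {k | ∃ F : Finset (Fin n × Fin n), IsOutForest ε F ∧ F.card = k}

/-- The Kirchhoff matrix: `l i j = -ε j i` for `j ≠ i`, `l i i = Σ_{k ≠ i} ε k i`. -/
noncomputable def kirchhoff {n : ℕ} (ε : Fin n → Fin n → ℝ) : Matrix (Fin n) (Fin n) ℝ :=
  Matrix.of fun i j =>
    if i = j then ∑ k ∈ Finset.univ.filter (· ≠ i), ε k i else -(ε j i)

/-- The normalized matrix of maximum out forests `J̄ = σ_{n−v}⁻¹ Q_{n−v}`. -/
noncomputable def Jbar {n : ℕ} (ε : Fin n → Fin n → ℝ) : Matrix (Fin n) (Fin n) ℝ :=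
  (sigmaW ε (maxForestCard ε))⁻¹ • QMat ε (maxForestCard ε)

/-- geometric observation model. If `P = I - αL` is stochastic, `τ > 0`
and `q = (τ/α + 1)⁻¹`, then `Σ_{k} q(1-q)^k P^k = (I + τL)⁻¹`. -/
theorem geometric_observation_model (n : ℕ) (hn : 1 < n) (ε : Fin n → Fin n → ℝ)
    (hnonneg : ∀ i j, 0 ≤ ε i j) (hdiag : ∀ i, ε i i = 0)
    (α τ q : ℝ) (hα : 0 < α) (hτ : 0 < τ)
    (P : Matrix (Fin n) (Fin n) ℝ) (hP : P = 1 - α • kirchhoff ε)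
    (hPnonneg : ∀ i j, 0 ≤ P i j) (hProw : ∀ i, ∑ j, P i j = 1)
    (hq : q = (τ / α + 1)⁻¹) :
    HasSum (fun k : ℕ => (q * (1 - q) ^ k) • P ^ k) (1 + τ • kirchhoff ε)⁻¹ := by
  haveI : Fact (1 < n) := ⟨hn⟩
  set L := kirchhoff ε with hL
  have hc : (1 : ℝ) < τ / α + 1 := by
    have : 0 < τ / α := div_pos hτ hα
    linarith
  have hq0 : 0 < q := by rw [hq]; positivity
  have hq1 : q < 1 := by rw [hq]; exact inv_lt_one_of_one_lt₀ hc
  have hqinv : q⁻¹ = τ / α + 1 := by rw [hq, inv_inv]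
  -- norm of P
  have hPnorm : ‖P‖₊ ≤ 1 := by
    rw [Matrix.linfty_opNNNorm_def]
    refine Finset.sup_le fun i _ => ?_
    have : ((∑ j, ‖P i j‖₊ : NNReal) : ℝ) = 1 := by
      push_cast
      calc (∑ j, (‖P i j‖₊ : ℝ)) = ∑ j, P i j := by
            refine Finset.sum_congr rfl fun j _ => ?_
            rw [coe_nnnorm, Real.norm_of_nonneg (hPnonneg i j)]
        _ = 1 := hProw i
    exact le_of_eq (by exact_mod_cast this)
  set x := (1 - q) • P with hx
  have hxnorm : ‖x‖ < 1 := by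
    have : ‖x‖ = ‖(1 - q)‖ * ‖P‖ := norm_smul _ _
    rw [this, Real.norm_of_nonneg (by linarith)]
    have hPn : ‖P‖ ≤ 1 := by exact_mod_cast hPnorm
    nlinarith [norm_nonneg P]
  -- geometric series
  have hgeom : HasSum (fun k : ℕ => x ^ k) (Ring.inverse (1 - x)) :=
    hasSum_geom_series_inverse x hxnorm
  have hunit : IsUnit (1 - x) := isUnit_one_sub_of_norm_lt_one hxnorm
  -- key algebraic identity
  have key : (1 : Matrix (Fin n) (Fin n) ℝ) + τ • L = q⁻¹ • (1 - x) := by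
    rw [hx, hP]
    have hqq : q⁻¹ * q = 1 := inv_mul_cancel₀ hq0.ne'
    have h2 : q⁻¹ * (1 - q) * α = τ := by
      have : q⁻¹ * (1 - q) * α = (q⁻¹ - q⁻¹ * q) * α := by ring
      rw [this, hqq, hqinv]
      field_simp
      ring
    match_scalars
    · linarith [hqq]
    · rw [← h2]; ring
  have hdet : IsUnit (1 - x).det := (Matrix.isUnit_iff_isUnit_det _).mp hunit
  have hinv : (1 + τ • L)⁻¹ = q • Ring.inverse (1 - x) := by
    rw [key]
    haveI : Invertible (q⁻¹) := invertibleOfNonzero (inv_ne_zero hq0.ne')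
    rw [Matrix.inv_smul (A := 1 - x) q⁻¹ hdet, Matrix.nonsing_inv_eq_ringInverse]
    congr 1
    rw [invOf_eq_inv, inv_inv]
  rw [hinv]
  have := hgeom.const_smul q
  convert this using 2 with k
  rw [hx, smul_pow, smul_smul]
end

section
/- For every weighted digraph and every k with 0 ≤ k ≤ n−v, the matrices of out forests satisfy the recurrence Q_{k+1} = σ_{k+1}·I − L·Q_k (where Q_{n−v+1} is the zero matrix and σ_{n−v+1} = 0, since there are no out forests with more than n−v arcs). -/
open Matrix BigOperators Filter

namespace QRec
attribute [local instance low] Classical.propDecidable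
variable {n : ℕ}

def Reach (F : Finset (Fin n × Fin n)) : Fin n → Fin n → Prop :=
  Relation.ReflTransGen (fun a b => (a, b) ∈ F)

noncomputable def par (F : Finset (Fin n × Fin n)) (i : Fin n) : Fin n :=
  if h : ∃ u, (u, i) ∈ F then h.choose else i

lemma par_mem {F : Finset (Fin n × Fin n)} {i : Fin n} (h : ∃ u, (u, i) ∈ F) :
    (par F i, i) ∈ F := by
  rw [par, dif_pos h]; exact h.choose_spec

variable {ε : Fin n → Fin n → ℝ}

lemma reach_mono {F F' : Finset (Fin n × Fin n)} (h : F ⊆ F') {x y : Fin n}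
    (hr : Reach F x y) : Reach F' x y :=
  Relation.ReflTransGen.mono (fun a b hab => h hab) x y hr

lemma exists_walk {F : Finset (Fin n × Fin n)} {x y : Fin n} (h : Reach F x y) :
    ∃ (L : ℕ) (f : ℕ → Fin n), f 0 = x ∧ f L = y ∧ ∀ t < L, (f t, f (t + 1)) ∈ F := by
  induction h with
  | refl => exact ⟨0, fun _ => x, rfl, rfl, fun t ht => absurd ht (Nat.not_lt_zero t)⟩
  | @tail b c hab hstep ih =>
    obtain ⟨L, f, h0, hL, hs⟩ := ih
    refine ⟨L + 1, fun t => if t ≤ L then f t else c, by simp [h0], by simp, ?_⟩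
    intro t ht
    rcases Nat.lt_succ_iff_lt_or_eq.mp ht with h' | h'
    · simpa [Nat.le_of_lt h', Nat.succ_le_of_lt h'] using hs t h'
    · subst h'; simpa [hL] using hstep

lemma walk_reach {F : Finset (Fin n × Fin n)} (g : ℕ → Fin n) (a : ℕ) :
    ∀ d : ℕ, (∀ u < d, (g (a + u), g (a + u + 1)) ∈ F) → Reach F (g a) (g (a + d)) := by
  intro d
  induction d with
  | zero => intro _; exact Relation.ReflTransGen.refl
  | succ d ih =>
    intro h
    exact Relation.ReflTransGen.tail (ih fun u hu => h u (Nat.lt_succ_of_lt hu))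
      (h d (Nat.lt_succ_self d))


lemma no_reach_back {F : Finset (Fin n × Fin n)} (hF : IsOutForest ε F) {a b : Fin n}
    (hab : (a, b) ∈ F) (h : Reach F b a) : False := by
  obtain ⟨L, f, h0, hL, hs⟩ := exists_walk h
  refine hF.2.2 ⟨L + 1, fun t => if t = 0 then a else f (t - 1), Nat.succ_pos L, by simp [hL], ?_⟩
  intro t ht
  rcases Nat.eq_zero_or_pos t with h' | h'
  · subst h'; simpa [h0] using hab
  · have h1 : t - 1 < L := by omega
    have : t - 1 + 1 = t := by omega
    simpa [Nat.pos_iff_ne_zero.mp h', this] using hs (t - 1) h1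

lemma subset_forest {F F' : Finset (Fin n × Fin n)} (h : F' ⊆ F) (hF : IsOutForest ε F) :
    IsOutForest ε F' := by
  refine ⟨fun p hp => hF.1 p (h hp), fun u u' v hu hu' => hF.2.1 u u' v (h hu) (h hu'), ?_⟩
  rintro ⟨k, f, hk, hf, hst⟩
  exact hF.2.2 ⟨k, f, hk, hf, fun i hi => h (hst i hi)⟩

lemma reach_root {F : Finset (Fin n × Fin n)} {j x : Fin n} (hroot : ∀ u, (u, j) ∉ F)
    (h : Reach F x j) : x = j := by
  rcases (Relation.ReflTransGen.cases_tail h) with h' | ⟨c, _, hc⟩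
  · exact h'.symm
  · exact absurd hc (hroot c)

lemma reach_erase_or {F : Finset (Fin n × Fin n)} {x y : Fin n} (h : Reach F x y)
    (e : Fin n × Fin n) :
    Reach (F.erase e) x y ∨ (Reach (F.erase e) x e.1 ∧ Reach F e.2 y) := by
  induction h using Relation.ReflTransGen.head_induction_on with
  | refl => exact Or.inl Relation.ReflTransGen.refl
  | @head a b hab hby ih =>
    by_cases he : (a, b) = e
    · refine Or.inr ⟨?_, ?_⟩
      · rw [show e.1 = a from (congrArg Prod.fst he).symm]; exact Relation.ReflTransGen.refl
      · rw [show e.2 = b from (congrArg Prod.snd he).symm]; exact hby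
    · have hmem : (a, b) ∈ F.erase e := Finset.mem_erase.mpr ⟨he, hab⟩
      rcases ih with h' | ⟨h1, h2⟩
      · exact Or.inl (Relation.ReflTransGen.head hmem h')
      · exact Or.inr ⟨Relation.ReflTransGen.head hmem h1, h2⟩

lemma comparable {F : Finset (Fin n × Fin n)}
    (huniq : ∀ u u' v : Fin n, (u, v) ∈ F → (u', v) ∈ F → u = u')
    {x y m : Fin n} (hx : Reach F x m) (hy : Reach F y m) :
    Reach F x y ∨ Reach F y x := by
  induction hx with
  | refl => exact Or.inr hy
  | @tail c m' hxc hcm ih =>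
    rcases Relation.ReflTransGen.cases_tail hy with h' | ⟨b, hyb, hbm⟩
    · subst h'; exact Or.inl (Relation.ReflTransGen.tail hxc hcm)
    · have : b = c := huniq b c m' hbm hcm
      subst this
      exact ih hyb


lemma reach_insert_src {F : Finset (Fin n × Fin n)} {m i x : Fin n}
    (h : Reach (insert (m, i) F) x m) : Reach F x m ∨ Reach F i m := by
  induction h using Relation.ReflTransGen.head_induction_on with
  | refl => exact Or.inl Relation.ReflTransGen.refl
  | @head a b hab hby ih =>
    by_cases he : (a, b) = (m, i)
    · have hb : b = i := congrArg Prod.snd he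
      subst hb
      rcases ih with h' | h' <;> exact Or.inr h'
    · have hmem : (a, b) ∈ F := by
        rcases Finset.mem_insert.mp hab with h' | h'
        · exact absurd h' he
        · exact h'
      rcases ih with h' | h'
      · exact Or.inl (Relation.ReflTransGen.head hmem h')
      · exact Or.inr h'


lemma insert_forest {F : Finset (Fin n × Fin n)} (hF : IsOutForest ε F) {m i : Fin n}
    (hmi : 0 < ε m i) (hroot : ∀ u, (u, i) ∉ F) (hnr : ¬ Reach F i m) :
    IsOutForest ε (insert (m, i) F) := by
  refine ⟨?_, ?_, ?_⟩
  · intro p hp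
    rcases Finset.mem_insert.mp hp with h' | h'
    · subst h'; exact hmi
    · exact hF.1 p h'
  · intro u u' v hu hu'
    rcases Finset.mem_insert.mp hu with h' | h' <;> rcases Finset.mem_insert.mp hu' with h'' | h''
    · injection h' with a1 b1; injection h'' with a2 b2; rw [a1, a2]
    · injection h' with a1 b1; subst b1; exact absurd h'' (hroot u')
    · injection h'' with a2 b2; subst b2; exact absurd h' (hroot u)
    · exact hF.2.1 u u' v h' h''
  · rintro ⟨k, f, hk, hf, hst⟩
    by_cases hall : ∀ t < k, (f t, f (t + 1)) ∈ F
    · exact hF.2.2 ⟨k, f, hk, hf, hall⟩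
    push_neg at hall
    obtain ⟨t, ht, hnot⟩ := hall
    have hstep_t : (f t, f (t + 1)) = (m, i) := by
      rcases Finset.mem_insert.mp (hst t ht) with h' | h'
      · exact h'
      · exact absurd h' hnot
    have hft : f t = m := congrArg Prod.fst hstep_t
    have hft1 : f (t + 1) = i := congrArg Prod.snd hstep_t
    have hseg1 : Reach (insert (m, i) F) (f (t + 1)) (f k) := by
      have := walk_reach f (t + 1) (k - (t + 1)) (fun u hu => hst (t + 1 + u) (by omega))
      rwa [show t + 1 + (k - (t + 1)) = k by omega] at this
    have hseg2 : Reach (insert (m, i) F) (f 0) (f t) := by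
      have := walk_reach f 0 t (fun u hu => hst (0 + u) (by omega))
      simpa using this
    have hreach : Reach (insert (m, i) F) i m := by
      have h2 := Relation.ReflTransGen.trans hseg1 (hf ▸ hseg2)
      rwa [hft1, hft] at h2
    rcases reach_insert_src hreach with h' | h' <;> exact hnr h'



lemma par_unique {F : Finset (Fin n × Fin n)} (hF : IsOutForest ε F) {u i : Fin n}
    (hu : (u, i) ∈ F) : par F i = u :=
  hF.2.1 _ _ i (par_mem ⟨_, hu⟩) hu

lemma forestWeight_insert {F : Finset (Fin n × Fin n)} {p : Fin n × Fin n} (h : p ∉ F) :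
    forestWeight ε (insert p F) = ε p.1 p.2 * forestWeight ε F :=
  Finset.prod_insert h

lemma finsum_setOf {α : Type*} [Fintype α] (P : α → Prop) [DecidablePred P] (w : α → ℝ) :
    ∑ᶠ x ∈ {x | P x}, w x = ∑ x ∈ Finset.univ.filter P, w x := by
  rw [← finsum_mem_coe_finset]
  congr 1
  ext x; simp

lemma pair_sum {β γ : Type*} [Fintype β] [Fintype γ] (P : β → Prop) (Q : β → γ → Prop)
    [DecidablePred P] [∀ b, DecidablePred (Q b)] (g : β → ℝ) (w : γ → ℝ) :
    ∑ m ∈ Finset.univ.filter P, g m * ∑ F ∈ Finset.univ.filter (Q m), w F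
      = ∑ p ∈ Finset.univ.filter (fun p : β × γ => P p.1 ∧ Q p.1 p.2), g p.1 * w p.2 := by
  rw [Finset.sum_filter, Finset.sum_filter, Fintype.sum_prod_type]
  refine Finset.sum_congr rfl fun m _ => ?_
  by_cases h : P m
  · simp only [h, if_true, true_and, Finset.sum_filter, Finset.mul_sum, mul_ite, mul_zero]
  · simp [h]

lemma root_not_reach {F : Finset (Fin n × Fin n)} {i j : Fin n} (hij : i ≠ j)
    (hroot : ∀ u, (u, i) ∉ F) : ¬ Reach F j i := by
  intro h
  rcases Relation.ReflTransGen.cases_tail h with h' | ⟨c, _, hc⟩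
  · exact hij h'
  · exact hroot c hc

lemma sum_nonroot (hF0 : True) (k : ℕ) (i : Fin n) :
    ∑ p ∈ Finset.univ.filter (fun p : Fin n × Finset (Fin n × Fin n) =>
        0 < ε p.1 i ∧ IsOutForest ε p.2 ∧ p.2.card = k ∧ (∀ u, (u, i) ∉ p.2) ∧
          ¬ Reach p.2 i p.1),
      ε p.1 i * forestWeight ε p.2
    = ∑ F ∈ Finset.univ.filter (fun F : Finset (Fin n × Fin n) =>
        IsOutForest ε F ∧ F.card = k + 1 ∧ ¬ (∀ u, (u, i) ∉ F)), forestWeight ε F := by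
  refine Finset.sum_nbij' (fun p => insert (p.1, i) p.2)
    (fun F => (par F i, F.erase (par F i, i))) ?_ ?_ ?_ ?_ ?_
  · rintro ⟨m, F⟩ hp
    simp only [Finset.mem_filter, Finset.mem_univ, true_and] at hp ⊢
    obtain ⟨hε, hF, hcard, hroot, hnr⟩ := hp
    refine ⟨insert_forest hF hε hroot hnr, ?_, ?_⟩
    · rw [Finset.card_insert_of_notMem (hroot m), hcard]
    · push_neg
      exact ⟨m, Finset.mem_insert_self _ _⟩
  · intro F hF'
    simp only [Finset.mem_filter, Finset.mem_univ, true_and] at hF' ⊢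
    obtain ⟨hF, hcard, hex⟩ := hF'
    push_neg at hex
    have hp : (par F i, i) ∈ F := par_mem hex
    refine ⟨hF.1 _ hp, subset_forest (Finset.erase_subset _ _) hF, ?_, ?_, ?_⟩
    · rw [Finset.card_erase_of_mem hp, hcard]; rfl
    · intro u hu
      have hu' : (u, i) ∈ F := Finset.mem_of_mem_erase hu
      exact (Finset.ne_of_mem_erase hu) (by rw [par_unique hF hu'])
    · intro h
      exact no_reach_back hF hp (reach_mono (Finset.erase_subset _ _) h)
  · rintro ⟨m, F⟩ hp
    simp only [Finset.mem_filter, Finset.mem_univ, true_and] at hp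
    obtain ⟨hε, hF, hcard, hroot, hnr⟩ := hp
    have hpar : par (insert (m, i) F) i = m := by
      have h1 : (par (insert (m, i) F) i, i) ∈ insert (m, i) F :=
        par_mem ⟨m, Finset.mem_insert_self _ _⟩
      rcases Finset.mem_insert.mp h1 with h' | h'
      · exact congrArg Prod.fst h'
      · exact absurd h' (hroot _)
    simp only [hpar]
    rw [Finset.erase_insert (hroot m)]
  · intro F hF'
    simp only [Finset.mem_filter, Finset.mem_univ, true_and] at hF'
    obtain ⟨hF, hcard, hex⟩ := hF'
    push_neg at hex
    exact Finset.insert_erase (par_mem hex)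
  · rintro ⟨m, F⟩ hp
    simp only [Finset.mem_filter, Finset.mem_univ, true_and] at hp
    exact (forestWeight_insert (hp.2.2.2.1 m)).symm

lemma sum_grow_root (k : ℕ) {i j : Fin n} (hij : i ≠ j) :
    ∑ p ∈ Finset.univ.filter (fun p : Fin n × Finset (Fin n × Fin n) =>
        0 < ε p.1 i ∧ IsOutForest ε p.2 ∧ p.2.card = k ∧ (∀ u, (u, j) ∉ p.2) ∧
          Reach p.2 j p.1 ∧ (∀ u, (u, i) ∉ p.2)),
      ε p.1 i * forestWeight ε p.2
    = ∑ F ∈ Finset.univ.filter (fun F : Finset (Fin n × Fin n) =>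
        IsOutForest ε F ∧ F.card = k + 1 ∧ (∀ u, (u, j) ∉ F) ∧ Reach F j i),
      forestWeight ε F := by
  refine Finset.sum_nbij' (fun p => insert (p.1, i) p.2)
    (fun F => (par F i, F.erase (par F i, i))) ?_ ?_ ?_ ?_ ?_
  · rintro ⟨m, F⟩ hp
    simp only [Finset.mem_filter, Finset.mem_univ, true_and] at hp ⊢
    obtain ⟨hε, hF, hcard, hrootj, hjm, hrooti⟩ := hp
    have hnim : ¬ Reach F i m := by
      intro h
      rcases comparable hF.2.1 h hjm with h' | h'
      · exact hij (reach_root hrootj h')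
      · exact root_not_reach hij hrooti h'
    refine ⟨insert_forest hF hε hrooti hnim, ?_, ?_, ?_⟩
    · rw [Finset.card_insert_of_notMem (hrooti m), hcard]
    · intro u hu
      rcases Finset.mem_insert.mp hu with h' | h'
      · exact hij (congrArg Prod.snd h').symm
      · exact hrootj u h'
    · exact Relation.ReflTransGen.tail (reach_mono (Finset.subset_insert _ _) hjm)
        (Finset.mem_insert_self _ _)
  · intro F hF'
    simp only [Finset.mem_filter, Finset.mem_univ, true_and] at hF' ⊢
    obtain ⟨hF, hcard, hrootj, hji⟩ := hF'
    obtain ⟨c, hjc, hci⟩ : ∃ c, Reach F j c ∧ (c, i) ∈ F := by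
      rcases Relation.ReflTransGen.cases_tail hji with h' | ⟨c, hjc, hci⟩
      · exact absurd h' hij
      · exact ⟨c, hjc, hci⟩
    have hpc : par F i = c := par_unique hF hci
    have hp : (par F i, i) ∈ F := par_mem ⟨c, hci⟩
    refine ⟨hF.1 _ hp, subset_forest (Finset.erase_subset _ _) hF, ?_, ?_, ?_, ?_⟩
    · rw [Finset.card_erase_of_mem hp, hcard]; rfl
    · intro u hu
      exact hrootj u (Finset.mem_of_mem_erase hu)
    · rw [hpc]
      rcases reach_erase_or hjc (c, i) with h' | ⟨h', _⟩ <;> exact h'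
    · intro u hu
      have hu' : (u, i) ∈ F := Finset.mem_of_mem_erase hu
      exact (Finset.ne_of_mem_erase hu) (by rw [par_unique hF hu'])
  · rintro ⟨m, F⟩ hp
    simp only [Finset.mem_filter, Finset.mem_univ, true_and] at hp
    obtain ⟨hε, hF, hcard, hrootj, hjm, hrooti⟩ := hp
    have hpar : par (insert (m, i) F) i = m := by
      have h1 : (par (insert (m, i) F) i, i) ∈ insert (m, i) F :=
        par_mem ⟨m, Finset.mem_insert_self _ _⟩
      rcases Finset.mem_insert.mp h1 with h' | h'
      · exact congrArg Prod.fst h'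
      · exact absurd h' (hrooti _)
    simp only [hpar]
    rw [Finset.erase_insert (hrooti m)]
  · intro F hF'
    simp only [Finset.mem_filter, Finset.mem_univ, true_and] at hF'
    obtain ⟨hF, hcard, hrootj, hji⟩ := hF'
    obtain ⟨c, hci⟩ : ∃ c, (c, i) ∈ F := by
      rcases Relation.ReflTransGen.cases_tail hji with h' | ⟨c, _, hci⟩
      · exact absurd h' hij
      · exact ⟨c, hci⟩
    exact Finset.insert_erase (par_mem ⟨c, hci⟩)
  · rintro ⟨m, F⟩ hp
    simp only [Finset.mem_filter, Finset.mem_univ, true_and] at hp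
    exact (forestWeight_insert (hp.2.2.2.2.2 m)).symm

lemma sum_swap_parent (k : ℕ) {i j : Fin n} (hij : i ≠ j) :
    ∑ p ∈ Finset.univ.filter (fun p : Fin n × Finset (Fin n × Fin n) =>
        0 < ε p.1 i ∧ IsOutForest ε p.2 ∧ p.2.card = k ∧ (∀ u, (u, j) ∉ p.2) ∧
          Reach p.2 j p.1 ∧ ¬ Reach p.2 j i ∧ ¬ (∀ u, (u, i) ∉ p.2)),
      ε p.1 i * forestWeight ε p.2
    = ∑ p ∈ Finset.univ.filter (fun p : Fin n × Finset (Fin n × Fin n) =>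
        0 < ε p.1 i ∧ IsOutForest ε p.2 ∧ p.2.card = k ∧ (∀ u, (u, j) ∉ p.2) ∧
          Reach p.2 j i ∧ ¬ Reach p.2 j p.1),
      ε p.1 i * forestWeight ε p.2 := by
  have hnmE : ∀ (F : Finset (Fin n × Fin n)), IsOutForest ε F → ∀ m : Fin n,
      (m, i) ∉ F.erase (par F i, i) := by
    intro F hF m hmem
    exact (Finset.mem_erase.mp hmem).1
      (by rw [par_unique hF (Finset.mem_erase.mp hmem).2])
  have key : ∀ (F : Finset (Fin n × Fin n)), IsOutForest ε F → ∀ m : Fin n,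
      par (insert (m, i) (F.erase (par F i, i))) i = m := by
    intro F hF m
    have h1 : (par (insert (m, i) (F.erase (par F i, i))) i, i)
        ∈ insert (m, i) (F.erase (par F i, i)) :=
      par_mem ⟨m, Finset.mem_insert_self _ _⟩
    rcases Finset.mem_insert.mp h1 with h' | h'
    · exact congrArg Prod.fst h'
    · have h2 := par_unique hF (Finset.mem_of_mem_erase h')
      exact absurd (by rw [← h2]) (Finset.mem_erase.mp h').1
  have round : ∀ m (F : Finset (Fin n × Fin n)), IsOutForest ε F → (∃ u, (u, i) ∈ F) →
      (par (insert (m, i) (F.erase (par F i, i))) i,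
        insert (par F i, i) ((insert (m, i) (F.erase (par F i, i))).erase
          (par (insert (m, i) (F.erase (par F i, i))) i, i))) = (m, F) := by
    intro m F hF hex
    rw [key F hF m, Finset.erase_insert (hnmE F hF m), Finset.insert_erase (par_mem hex)]
  refine Finset.sum_nbij'
    (fun p => (par p.2 i, insert (p.1, i) (p.2.erase (par p.2 i, i))))
    (fun p => (par p.2 i, insert (p.1, i) (p.2.erase (par p.2 i, i)))) ?_ ?_ ?_ ?_ ?_
  · rintro ⟨m, F⟩ hp
    simp only [Finset.mem_filter, Finset.mem_univ, true_and] at hp ⊢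
    obtain ⟨hε, hF, hcard, hrootj, hjm, hnji, hnroot⟩ := hp
    push_neg at hnroot
    obtain ⟨u0, hu0⟩ := hnroot
    have hp' : (par F i, i) ∈ F := par_mem ⟨u0, hu0⟩
    have hnim : ¬ Reach F i m := by
      intro h
      rcases comparable hF.2.1 h hjm with h' | h'
      · exact hij (reach_root hrootj h')
      · exact hnji h'
    have hrootiE : ∀ u, (u, i) ∉ F.erase (par F i, i) := by
      intro u hu
      exact (Finset.ne_of_mem_erase hu)
        (by rw [par_unique hF (Finset.mem_of_mem_erase hu)])
    have hEforest : IsOutForest ε (F.erase (par F i, i)) :=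
      subset_forest (Finset.erase_subset _ _) hF
    have hnimE : ¬ Reach (F.erase (par F i, i)) i m :=
      fun h => hnim (reach_mono (Finset.erase_subset _ _) h)
    have hnm := hnmE F hF m
    refine ⟨hF.1 _ hp', insert_forest hEforest hε hrootiE hnimE, ?_, ?_, ?_, ?_⟩
    · rw [Finset.card_insert_of_notMem hnm, Finset.card_erase_of_mem hp', hcard]
      have : 0 < k := hcard ▸ Finset.card_pos.mpr ⟨_, hp'⟩
      omega
    · intro u hu
      rcases Finset.mem_insert.mp hu with h' | h'
      · exact hij (congrArg Prod.snd h').symm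
      · exact hrootj u (Finset.mem_of_mem_erase h')
    · rcases reach_erase_or hjm (par F i, i) with h' | ⟨_, h2⟩
      · exact Relation.ReflTransGen.tail (reach_mono (Finset.subset_insert _ _) h')
          (Finset.mem_insert_self _ _)
      · exact absurd h2 hnim
    · intro h
      rcases reach_erase_or h (m, i) with h' | ⟨_, h2⟩
      · rw [Finset.erase_insert hnm] at h'
        exact hnji (Relation.ReflTransGen.tail
          (reach_mono (Finset.erase_subset _ _) h') hp')
      · rcases reach_erase_or h2 (m, i) with h3 | ⟨h3, _⟩ <;>
          rw [Finset.erase_insert hnm] at h3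
        · exact no_reach_back hF hp' (reach_mono (Finset.erase_subset _ _) h3)
        · exact hnimE h3
  · rintro ⟨m, F⟩ hp
    simp only [Finset.mem_filter, Finset.mem_univ, true_and] at hp ⊢
    obtain ⟨hε, hF, hcard, hrootj, hji, hnjm⟩ := hp
    obtain ⟨c, hjc, hci⟩ : ∃ c, Reach F j c ∧ (c, i) ∈ F := by
      rcases Relation.ReflTransGen.cases_tail hji with h' | ⟨c, hjc, hci⟩
      · exact absurd h' hij
      · exact ⟨c, hjc, hci⟩
    have hpc : par F i = c := par_unique hF hci
    have hp' : (par F i, i) ∈ F := par_mem ⟨c, hci⟩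
    have hnim : ¬ Reach F i m := fun h => hnjm (hji.trans h)
    have hrootiE : ∀ u, (u, i) ∉ F.erase (par F i, i) := by
      intro u hu
      exact (Finset.ne_of_mem_erase hu)
        (by rw [par_unique hF (Finset.mem_of_mem_erase hu)])
    have hEforest : IsOutForest ε (F.erase (par F i, i)) :=
      subset_forest (Finset.erase_subset _ _) hF
    have hnimE : ¬ Reach (F.erase (par F i, i)) i m :=
      fun h => hnim (reach_mono (Finset.erase_subset _ _) h)
    have hnm := hnmE F hF m
    refine ⟨hF.1 _ hp', insert_forest hEforest hε hrootiE hnimE, ?_, ?_, ?_, ?_, ?_⟩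
    · rw [Finset.card_insert_of_notMem hnm, Finset.card_erase_of_mem hp', hcard]
      have : 0 < k := hcard ▸ Finset.card_pos.mpr ⟨_, hp'⟩
      omega
    · intro u hu
      rcases Finset.mem_insert.mp hu with h' | h'
      · exact hij (congrArg Prod.snd h').symm
      · exact hrootj u (Finset.mem_of_mem_erase h')
    · rw [hpc]
      rcases reach_erase_or hjc (par F i, i) with h' | ⟨h', _⟩ <;>
        · rw [hpc] at h'
          exact reach_mono (Finset.subset_insert _ _) h'
    · intro h
      rcases Relation.ReflTransGen.cases_tail h with h' | ⟨d, hjd, hdi⟩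
      · exact hij h'
      · have hd : d = m := by
          rcases Finset.mem_insert.mp hdi with h'' | h''
          · exact congrArg Prod.fst h''
          · exact absurd h'' (hrootiE d)
        subst hd
        rcases reach_erase_or hjd (d, i) with h3 | ⟨h3, _⟩ <;>
          · rw [Finset.erase_insert hnm] at h3
            exact hnjm (reach_mono (Finset.erase_subset _ _) h3)
    · intro hall
      exact hall m (Finset.mem_insert_self _ _)
  · rintro ⟨m, F⟩ hp
    simp only [Finset.mem_filter, Finset.mem_univ, true_and] at hp
    have hex : ∃ u, (u, i) ∈ F := by
      have := hp.2.2.2.2.2.2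
      push_neg at this
      exact this
    exact round m F hp.2.1 hex
  · rintro ⟨m, F⟩ hp
    simp only [Finset.mem_filter, Finset.mem_univ, true_and] at hp
    obtain ⟨hε, hF, hcard, hrootj, hji, hnjm⟩ := hp
    have hex : ∃ u, (u, i) ∈ F := by
      rcases Relation.ReflTransGen.cases_tail hji with h' | ⟨c, _, hci⟩
      · exact absurd h' hij
      · exact ⟨c, hci⟩
    exact round m F hF hex
  · rintro ⟨m, F⟩ hp
    simp only [Finset.mem_filter, Finset.mem_univ, true_and] at hp
    obtain ⟨hε, hF, hcard, hrootj, hjm, hnji, hnroot⟩ := hp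
    push_neg at hnroot
    have hp' : (par F i, i) ∈ F := par_mem hnroot
    have hnm := hnmE F hF m
    have h1 : forestWeight ε (insert (m, i) (F.erase (par F i, i)))
        = ε m i * forestWeight ε (F.erase (par F i, i)) := forestWeight_insert hnm
    have h2 : ε (par F i) i * forestWeight ε (F.erase (par F i, i)) = forestWeight ε F :=
      Finset.mul_prod_erase F (fun q => ε q.1 q.2) hp'
    rw [← h2, h1]
    ring

lemma sum_filter_congr {α : Type*} [Fintype α] {P Q : α → Prop}
    [DecidablePred P] [DecidablePred Q] (h : ∀ a, P a ↔ Q a) (f : α → ℝ) :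
    ∑ a ∈ Finset.univ.filter P, f a = ∑ a ∈ Finset.univ.filter Q, f a := by
  refine Finset.sum_congr ?_ fun _ _ => rfl
  ext a
  simp only [Finset.mem_filter, Finset.mem_univ, true_and]
  exact h a

lemma sum_filter_split {α : Type*} [Fintype α] (P C : α → Prop)
    [DecidablePred P] [DecidablePred C] (f : α → ℝ) :
    ∑ a ∈ Finset.univ.filter P, f a
      = (∑ a ∈ Finset.univ.filter (fun a => P a ∧ C a), f a)
        + ∑ a ∈ Finset.univ.filter (fun a => P a ∧ ¬ C a), f a := by
  rw [← Finset.sum_filter_add_sum_filter_not (Finset.univ.filter P) C f]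
  congr 1 <;>
    · refine Finset.sum_congr ?_ fun _ _ => rfl
      ext a
      simp only [Finset.mem_filter, Finset.mem_univ, true_and, and_assoc]

end QRec

set_option maxHeartbeats 2000000 in
/-- the recurrence `Q_{k+1} = σ_{k+1}·I − L·Q_k` for `0 ≤ k ≤ n−v`
(for `k = n−v` both `Q_{n−v+1}` and `σ_{n−v+1}` vanish by definition). -/
theorem QMat_succ_recurrence (n : ℕ) (hn : 1 < n) (ε : Fin n → Fin n → ℝ)
    (hnonneg : ∀ i j, 0 ≤ ε i j) (hdiag : ∀ i, ε i i = 0) :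
    ∀ k : ℕ, k ≤ maxForestCard ε →
      QMat ε (k + 1) = sigmaW ε (k + 1) • (1 : Matrix (Fin n) (Fin n) ℝ)
        - kirchhoff ε * QMat ε k := by
  classical
  intro k _
  ext i j
  have hQ : ∀ (l : ℕ) (a b : Fin n), QMat ε l a b
      = ∑ F ∈ Finset.univ.filter (fun F : Finset (Fin n × Fin n) =>
          IsOutForest ε F ∧ F.card = l ∧ (∀ u, (u, b) ∉ F) ∧ QRec.Reach F b a),
        forestWeight ε F := by
    intro l a b
    simp only [QMat, Matrix.of_apply]
    exact QRec.finsum_setOf (fun F : Finset (Fin n × Fin n) =>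
      IsOutForest ε F ∧ F.card = l ∧ (∀ u, (u, b) ∉ F) ∧ QRec.Reach F b a)
      (forestWeight ε)
  have hσ : sigmaW ε (k + 1) = ∑ F ∈ Finset.univ.filter
      (fun F : Finset (Fin n × Fin n) => IsOutForest ε F ∧ F.card = k + 1),
      forestWeight ε F := by
    simp only [sigmaW]
    exact QRec.finsum_setOf (fun F : Finset (Fin n × Fin n) =>
      IsOutForest ε F ∧ F.card = k + 1) (forestWeight ε)
  rw [Matrix.sub_apply, Matrix.smul_apply, Matrix.mul_apply, Matrix.one_apply, smul_eq_mul]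
  have hksum : ∑ m : Fin n, kirchhoff ε i m * QMat ε k m j
      = (∑ m ∈ Finset.univ.filter (fun m => m ≠ i), ε m i * QMat ε k i j)
        - ∑ m ∈ Finset.univ.filter (fun m => m ≠ i), ε m i * QMat ε k m j := by
    have hsplit := Finset.sum_filter_add_sum_filter_not Finset.univ (fun m : Fin n => m = i)
        (fun m => kirchhoff ε i m * QMat ε k m j)
    have h1 : Finset.univ.filter (fun m : Fin n => m = i) = {i} := by
      ext m; simp
    have h2 : kirchhoff ε i i = ∑ m ∈ Finset.univ.filter (fun m => m ≠ i), ε m i := by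
      rw [kirchhoff]
      simp
    have h3 : ∑ m ∈ Finset.univ.filter (fun m : Fin n => ¬ m = i),
          kirchhoff ε i m * QMat ε k m j
        = - ∑ m ∈ Finset.univ.filter (fun m => m ≠ i), ε m i * QMat ε k m j := by
      rw [← Finset.sum_neg_distrib]
      refine Finset.sum_congr rfl ?_
      intro m hm
      have hmi : ¬ (i = m) := fun h =>
        (Finset.mem_filter.mp hm).2 h.symm
      rw [kirchhoff]
      simp only [Matrix.of_apply, if_neg hmi, neg_mul]
    rw [← hsplit, h1, Finset.sum_singleton, h2, h3, Finset.sum_mul]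
    ring
  have hdrop : ∀ X : Fin n → ℝ,
      ∑ m ∈ Finset.univ.filter (fun m => m ≠ i), ε m i * X m
        = ∑ m ∈ Finset.univ.filter (fun m => 0 < ε m i), ε m i * X m := by
    intro X
    refine (Finset.sum_subset ?_ ?_).symm
    · intro m hm
      simp only [Finset.mem_filter, Finset.mem_univ, true_and] at hm ⊢
      rintro rfl
      rw [hdiag] at hm
      exact lt_irrefl 0 hm
    · intro m _ hm2
      simp only [Finset.mem_filter, Finset.mem_univ, true_and] at hm2
      rw [le_antisymm (not_lt.mp hm2) (hnonneg m i), zero_mul]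
  have hpair1 : ∑ m ∈ Finset.univ.filter (fun m => 0 < ε m i), ε m i * QMat ε k m j
      = ∑ p ∈ Finset.univ.filter (fun p : Fin n × Finset (Fin n × Fin n) =>
          0 < ε p.1 i ∧ IsOutForest ε p.2 ∧ p.2.card = k ∧ (∀ u, (u, j) ∉ p.2) ∧
            QRec.Reach p.2 j p.1),
        ε p.1 i * forestWeight ε p.2 := by
    calc ∑ m ∈ Finset.univ.filter (fun m => 0 < ε m i), ε m i * QMat ε k m j
        = ∑ m ∈ Finset.univ.filter (fun m => 0 < ε m i), ε m i *
            ∑ F ∈ Finset.univ.filter (fun F : Finset (Fin n × Fin n) =>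
              IsOutForest ε F ∧ F.card = k ∧ (∀ u, (u, j) ∉ F) ∧ QRec.Reach F j m),
            forestWeight ε F :=
          Finset.sum_congr rfl fun m _ => by rw [hQ k m j]
      _ = _ := QRec.pair_sum _ _ _ _
  have hpair2 : ∑ m ∈ Finset.univ.filter (fun m => 0 < ε m i), ε m i * QMat ε k i j
      = ∑ p ∈ Finset.univ.filter (fun p : Fin n × Finset (Fin n × Fin n) =>
          0 < ε p.1 i ∧ IsOutForest ε p.2 ∧ p.2.card = k ∧ (∀ u, (u, j) ∉ p.2) ∧
            QRec.Reach p.2 j i),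
        ε p.1 i * forestWeight ε p.2 := by
    calc ∑ m ∈ Finset.univ.filter (fun m => 0 < ε m i), ε m i * QMat ε k i j
        = ∑ m ∈ Finset.univ.filter (fun m => 0 < ε m i), ε m i *
            ∑ F ∈ Finset.univ.filter (fun F : Finset (Fin n × Fin n) =>
              IsOutForest ε F ∧ F.card = k ∧ (∀ u, (u, j) ∉ F) ∧ QRec.Reach F j i),
            forestWeight ε F :=
          Finset.sum_congr rfl fun m _ => by rw [hQ k i j]
      _ = _ := QRec.pair_sum _ _ _ _
  rw [hksum, hdrop (fun _ => QMat ε k i j), hdrop (fun m => QMat ε k m j),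
    hpair1, hpair2, hQ (k + 1) i j, hσ]
  by_cases hij : i = j
  · subst hij
    rw [if_pos rfl, mul_one]
    have e1 : ∑ p ∈ Finset.univ.filter (fun p : Fin n × Finset (Fin n × Fin n) =>
          0 < ε p.1 i ∧ IsOutForest ε p.2 ∧ p.2.card = k ∧ (∀ u, (u, i) ∉ p.2) ∧
            QRec.Reach p.2 i i),
        ε p.1 i * forestWeight ε p.2
        = (∑ p ∈ Finset.univ.filter (fun p : Fin n × Finset (Fin n × Fin n) =>
            0 < ε p.1 i ∧ IsOutForest ε p.2 ∧ p.2.card = k ∧ (∀ u, (u, i) ∉ p.2) ∧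
              QRec.Reach p.2 i p.1),
          ε p.1 i * forestWeight ε p.2)
          + ∑ p ∈ Finset.univ.filter (fun p : Fin n × Finset (Fin n × Fin n) =>
              0 < ε p.1 i ∧ IsOutForest ε p.2 ∧ p.2.card = k ∧ (∀ u, (u, i) ∉ p.2) ∧
                ¬ QRec.Reach p.2 i p.1),
            ε p.1 i * forestWeight ε p.2 := by
      rw [QRec.sum_filter_split _ (fun p => QRec.Reach p.2 i p.1)]
      congr 1
      · refine QRec.sum_filter_congr (fun p => ?_) _
        constructor
        · rintro ⟨⟨h1, h2, h3, h4, _⟩, h6⟩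
          exact ⟨h1, h2, h3, h4, h6⟩
        · rintro ⟨h1, h2, h3, h4, h6⟩
          exact ⟨⟨h1, h2, h3, h4, Relation.ReflTransGen.refl⟩, h6⟩
      · refine QRec.sum_filter_congr (fun p => ?_) _
        constructor
        · rintro ⟨⟨h1, h2, h3, h4, _⟩, h6⟩
          exact ⟨h1, h2, h3, h4, h6⟩
        · rintro ⟨h1, h2, h3, h4, h6⟩
          exact ⟨⟨h1, h2, h3, h4, Relation.ReflTransGen.refl⟩, h6⟩
    have e2 : ∑ p ∈ Finset.univ.filter (fun p : Fin n × Finset (Fin n × Fin n) =>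
          0 < ε p.1 i ∧ IsOutForest ε p.2 ∧ p.2.card = k ∧ (∀ u, (u, i) ∉ p.2) ∧
            ¬ QRec.Reach p.2 i p.1),
        ε p.1 i * forestWeight ε p.2
        = ∑ F ∈ Finset.univ.filter (fun F : Finset (Fin n × Fin n) =>
            IsOutForest ε F ∧ F.card = k + 1 ∧ ¬ (∀ u, (u, i) ∉ F)),
          forestWeight ε F :=
      QRec.sum_nonroot trivial k i
    have e3 : ∑ F ∈ Finset.univ.filter
          (fun F : Finset (Fin n × Fin n) => IsOutForest ε F ∧ F.card = k + 1),
          forestWeight ε F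
        = (∑ F ∈ Finset.univ.filter (fun F : Finset (Fin n × Fin n) =>
            IsOutForest ε F ∧ F.card = k + 1 ∧ (∀ u, (u, i) ∉ F) ∧ QRec.Reach F i i),
          forestWeight ε F)
          + ∑ F ∈ Finset.univ.filter (fun F : Finset (Fin n × Fin n) =>
              IsOutForest ε F ∧ F.card = k + 1 ∧ ¬ (∀ u, (u, i) ∉ F)),
            forestWeight ε F := by
      rw [QRec.sum_filter_split _ (fun F : Finset (Fin n × Fin n) => ∀ u, (u, i) ∉ F)]
      congr 1
      · refine QRec.sum_filter_congr (fun F => ?_) _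
        constructor
        · rintro ⟨⟨h1, h2⟩, h3⟩
          exact ⟨h1, h2, h3, Relation.ReflTransGen.refl⟩
        · rintro ⟨h1, h2, h3, _⟩
          exact ⟨⟨h1, h2⟩, h3⟩
      · refine QRec.sum_filter_congr (fun F => ?_) _
        constructor
        · rintro ⟨⟨h1, h2⟩, h3⟩
          exact ⟨h1, h2, h3⟩
        · rintro ⟨h1, h2, h3⟩
          exact ⟨⟨h1, h2⟩, h3⟩
    linarith
  · rw [if_neg hij, mul_zero]
    have hij' : i ≠ j := hij
    have f1 : ∑ p ∈ Finset.univ.filter (fun p : Fin n × Finset (Fin n × Fin n) =>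
          0 < ε p.1 i ∧ IsOutForest ε p.2 ∧ p.2.card = k ∧ (∀ u, (u, j) ∉ p.2) ∧
            QRec.Reach p.2 j p.1),
        ε p.1 i * forestWeight ε p.2
        = (∑ p ∈ Finset.univ.filter (fun p : Fin n × Finset (Fin n × Fin n) =>
            (0 < ε p.1 i ∧ IsOutForest ε p.2 ∧ p.2.card = k ∧ (∀ u, (u, j) ∉ p.2) ∧
              QRec.Reach p.2 j p.1) ∧ QRec.Reach p.2 j i),
          ε p.1 i * forestWeight ε p.2)
          + ∑ p ∈ Finset.univ.filter (fun p : Fin n × Finset (Fin n × Fin n) =>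
              (0 < ε p.1 i ∧ IsOutForest ε p.2 ∧ p.2.card = k ∧ (∀ u, (u, j) ∉ p.2) ∧
                QRec.Reach p.2 j p.1) ∧ ¬ QRec.Reach p.2 j i),
            ε p.1 i * forestWeight ε p.2 :=
      QRec.sum_filter_split _ (fun p : Fin n × Finset (Fin n × Fin n) => QRec.Reach p.2 j i) _
    have f2 : ∑ p ∈ Finset.univ.filter (fun p : Fin n × Finset (Fin n × Fin n) =>
          0 < ε p.1 i ∧ IsOutForest ε p.2 ∧ p.2.card = k ∧ (∀ u, (u, j) ∉ p.2) ∧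
            QRec.Reach p.2 j i),
        ε p.1 i * forestWeight ε p.2
        = (∑ p ∈ Finset.univ.filter (fun p : Fin n × Finset (Fin n × Fin n) =>
            (0 < ε p.1 i ∧ IsOutForest ε p.2 ∧ p.2.card = k ∧ (∀ u, (u, j) ∉ p.2) ∧
              QRec.Reach p.2 j p.1) ∧ QRec.Reach p.2 j i),
          ε p.1 i * forestWeight ε p.2)
          + ∑ p ∈ Finset.univ.filter (fun p : Fin n × Finset (Fin n × Fin n) =>
              0 < ε p.1 i ∧ IsOutForest ε p.2 ∧ p.2.card = k ∧ (∀ u, (u, j) ∉ p.2) ∧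
                QRec.Reach p.2 j i ∧ ¬ QRec.Reach p.2 j p.1),
            ε p.1 i * forestWeight ε p.2 := by
      rw [QRec.sum_filter_split _ (fun p : Fin n × Finset (Fin n × Fin n) =>
        QRec.Reach p.2 j p.1)]
      congr 1
      · refine QRec.sum_filter_congr (fun p => ?_) _
        constructor
        · rintro ⟨⟨h1, h2, h3, h4, h5⟩, h6⟩
          exact ⟨⟨h1, h2, h3, h4, h6⟩, h5⟩
        · rintro ⟨⟨h1, h2, h3, h4, h6⟩, h5⟩
          exact ⟨⟨h1, h2, h3, h4, h5⟩, h6⟩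
      · refine QRec.sum_filter_congr (fun p => ?_) _
        constructor
        · rintro ⟨⟨h1, h2, h3, h4, h5⟩, h6⟩
          exact ⟨h1, h2, h3, h4, h5, h6⟩
        · rintro ⟨h1, h2, h3, h4, h5, h6⟩
          exact ⟨⟨h1, h2, h3, h4, h5⟩, h6⟩
    have f4 : ∑ p ∈ Finset.univ.filter (fun p : Fin n × Finset (Fin n × Fin n) =>
          (0 < ε p.1 i ∧ IsOutForest ε p.2 ∧ p.2.card = k ∧ (∀ u, (u, j) ∉ p.2) ∧
            QRec.Reach p.2 j p.1) ∧ ¬ QRec.Reach p.2 j i),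
        ε p.1 i * forestWeight ε p.2
        = (∑ p ∈ Finset.univ.filter (fun p : Fin n × Finset (Fin n × Fin n) =>
            0 < ε p.1 i ∧ IsOutForest ε p.2 ∧ p.2.card = k ∧ (∀ u, (u, j) ∉ p.2) ∧
              QRec.Reach p.2 j p.1 ∧ (∀ u, (u, i) ∉ p.2)),
          ε p.1 i * forestWeight ε p.2)
          + ∑ p ∈ Finset.univ.filter (fun p : Fin n × Finset (Fin n × Fin n) =>
              0 < ε p.1 i ∧ IsOutForest ε p.2 ∧ p.2.card = k ∧ (∀ u, (u, j) ∉ p.2) ∧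
                QRec.Reach p.2 j p.1 ∧ ¬ QRec.Reach p.2 j i ∧ ¬ (∀ u, (u, i) ∉ p.2)),
            ε p.1 i * forestWeight ε p.2 := by
      rw [QRec.sum_filter_split _ (fun p : Fin n × Finset (Fin n × Fin n) =>
        ∀ u, (u, i) ∉ p.2)]
      congr 1
      · refine QRec.sum_filter_congr (fun p => ?_) _
        constructor
        · rintro ⟨⟨⟨h1, h2, h3, h4, h5⟩, _⟩, h7⟩
          exact ⟨h1, h2, h3, h4, h5, h7⟩
        · rintro ⟨h1, h2, h3, h4, h5, h7⟩
          exact ⟨⟨⟨h1, h2, h3, h4, h5⟩, QRec.root_not_reach hij' h7⟩, h7⟩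
      · refine QRec.sum_filter_congr (fun p => ?_) _
        constructor
        · rintro ⟨⟨⟨h1, h2, h3, h4, h5⟩, h6⟩, h7⟩
          exact ⟨h1, h2, h3, h4, h5, h6, h7⟩
        · rintro ⟨h1, h2, h3, h4, h5, h6, h7⟩
          exact ⟨⟨⟨h1, h2, h3, h4, h5⟩, h6⟩, h7⟩
    have f5 : ∑ p ∈ Finset.univ.filter (fun p : Fin n × Finset (Fin n × Fin n) =>
          0 < ε p.1 i ∧ IsOutForest ε p.2 ∧ p.2.card = k ∧ (∀ u, (u, j) ∉ p.2) ∧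
            QRec.Reach p.2 j p.1 ∧ (∀ u, (u, i) ∉ p.2)),
        ε p.1 i * forestWeight ε p.2
        = ∑ F ∈ Finset.univ.filter (fun F : Finset (Fin n × Fin n) =>
            IsOutForest ε F ∧ F.card = k + 1 ∧ (∀ u, (u, j) ∉ F) ∧ QRec.Reach F j i),
          forestWeight ε F :=
      QRec.sum_grow_root k hij'
    have f6 : ∑ p ∈ Finset.univ.filter (fun p : Fin n × Finset (Fin n × Fin n) =>
          0 < ε p.1 i ∧ IsOutForest ε p.2 ∧ p.2.card = k ∧ (∀ u, (u, j) ∉ p.2) ∧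
            QRec.Reach p.2 j p.1 ∧ ¬ QRec.Reach p.2 j i ∧ ¬ (∀ u, (u, i) ∉ p.2)),
        ε p.1 i * forestWeight ε p.2
        = ∑ p ∈ Finset.univ.filter (fun p : Fin n × Finset (Fin n × Fin n) =>
            0 < ε p.1 i ∧ IsOutForest ε p.2 ∧ p.2.card = k ∧ (∀ u, (u, j) ∉ p.2) ∧
              QRec.Reach p.2 j i ∧ ¬ QRec.Reach p.2 j p.1),
          ε p.1 i * forestWeight ε p.2 :=
      QRec.sum_swap_parent k hij'
    linarith
end

section
/- For every weighted digraph and every k with 0 ≤ k ≤ n−v: tr(Q_k) = (n−k)·σ_k, σ_{k+1} = tr(L·Q_k)/(k+1), and consequently Q_{k+1} = (tr(L·Q_k)/(k+1))·I − L·Q_k (with Q_{n−v+1} the zero matrix). Starting from Q_0 = I, this recurrence determines all matrices Q_k. -/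
open Matrix BigOperators Filter

namespace ForestAux

variable {n : ℕ}

/-- arc relation of a finite arc set -/
def rel (F : Finset (Fin n × Fin n)) : Fin n → Fin n → Prop := fun a b => (a, b) ∈ F

abbrev Reach (F : Finset (Fin n × Fin n)) : Fin n → Fin n → Prop :=
  Relation.ReflTransGen (rel F)

lemma reach_mono {F G : Finset (Fin n × Fin n)} (h : F ⊆ G) {a b : Fin n}
    (hr : Reach F a b) : Reach G a b :=
  Relation.ReflTransGen.mono (r := rel F) (p := rel G) (fun _ _ hx => h hx) a b hr

lemma transGen_mono {F G : Finset (Fin n × Fin n)} (h : F ⊆ G) {a b : Fin n}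
    (hr : Relation.TransGen (rel F) a b) : Relation.TransGen (rel G) a b :=
  Relation.TransGen.mono (r := rel F) (p := rel G) (fun _ _ hx => h hx) a b hr

/-- Decomposition lemma: a walk in `G` either avoids the arc `(p,q)`, or it
reaches `p` avoiding the arc, and then continues from `q`. -/
lemma reach_erase_or {G : Finset (Fin n × Fin n)} {p q a b : Fin n}
    (h : Reach G a b) :
    Reach (G.erase (p, q)) a b ∨ (Reach (G.erase (p, q)) a p ∧ Reach G q b) := by
  induction h using Relation.ReflTransGen.head_induction_on with
  | refl => exact Or.inl Relation.ReflTransGen.refl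
  | head hax hxb ih =>
    rename_i a' x
    by_cases he : (a', x) = (p, q)
    · obtain ⟨rfl, rfl⟩ := Prod.mk.injEq .. ▸ he
      exact Or.inr ⟨Relation.ReflTransGen.refl, hxb⟩
    · have hmem : (a', x) ∈ G.erase (p, q) := Finset.mem_erase.2 ⟨he, hax⟩
      rcases ih with h1 | ⟨h1, h2⟩
      · exact Or.inl (Relation.ReflTransGen.head hmem h1)
      · exact Or.inr ⟨Relation.ReflTransGen.head hmem h1, h2⟩

lemma transGen_erase_or {G : Finset (Fin n × Fin n)} {p q a b : Fin n}
    (h : Relation.TransGen (rel G) a b) :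
    Relation.TransGen (rel (G.erase (p, q))) a b ∨
      (Reach (G.erase (p, q)) a p ∧ Reach G q b) := by
  induction h using Relation.TransGen.head_induction_on with
  | single hax =>
    rename_i a'
    by_cases he : (a', b) = (p, q)
    · obtain ⟨rfl, rfl⟩ := Prod.mk.injEq .. ▸ he
      exact Or.inr ⟨Relation.ReflTransGen.refl, Relation.ReflTransGen.refl⟩
    · exact Or.inl (Relation.TransGen.single (Finset.mem_erase.2 ⟨he, hax⟩))
  | head hax hxb ih =>
    rename_i a' x
    by_cases he : (a', x) = (p, q)
    · obtain ⟨rfl, rfl⟩ := Prod.mk.injEq .. ▸ he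
      exact Or.inr ⟨Relation.ReflTransGen.refl, hxb.to_reflTransGen⟩
    · have hmem : (a', x) ∈ G.erase (p, q) := Finset.mem_erase.2 ⟨he, hax⟩
      rcases ih with h1 | ⟨h1, h2⟩
      · exact Or.inl (Relation.TransGen.head hmem h1)
      · exact Or.inr ⟨Relation.ReflTransGen.head hmem h1, h2⟩

end ForestAux

namespace ForestAux
variable {n : ℕ}
lemma transGen_to_cycle {F : Finset (Fin n × Fin n)} {a b : Fin n}
    (h : Relation.TransGen (rel F) a b) :
    ∃ (k : ℕ) (f : ℕ → Fin n), 0 < k ∧ f 0 = a ∧ f k = b ∧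
      ∀ i < k, (f i, f (i + 1)) ∈ F := by
  induction h with
  | single hab =>
    rename_i c
    refine ⟨1, fun t => if t = 0 then a else c, one_pos, by simp, by simp, ?_⟩
    intro i hi
    interval_cases i
    simpa [rel] using hab
  | tail hab hbc ih =>
    rename_i b' c
    obtain ⟨k, f, hk, hf0, hfk, harc⟩ := ih
    refine ⟨k + 1, fun t => if t ≤ k then f t else c, Nat.succ_pos _, by simp [hf0], by simp, ?_⟩
    intro i hi
    rcases Nat.lt_or_ge i k with h1 | h1
    · simpa [Nat.le_of_lt h1, Nat.succ_le_of_lt h1] using harc i h1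
    · have : i = k := le_antisymm (Nat.lt_succ_iff.mp hi) h1
      subst this
      simpa [hfk, rel] using hbc

lemma cycle_to_transGen {F : Finset (Fin n × Fin n)} {k : ℕ} {f : ℕ → Fin n}
    (hk : 0 < k) (hcyc : f 0 = f k) (harc : ∀ i < k, (f i, f (i + 1)) ∈ F) :
    Relation.TransGen (rel F) (f 0) (f 0) := by
  have key : ∀ t, 1 ≤ t → t ≤ k → Relation.ReflTransGen (rel F) (f 1) (f t) := by
    intro t h1 h2
    induction t with
    | zero => omega
    | succ s ih =>
      rcases Nat.eq_or_lt_of_le h1 with he | hl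
      · rw [← he]
      · have hs1 : 1 ≤ s := by omega
        exact (ih hs1 (by omega)).tail (harc s (by omega))
  have h1 : Relation.ReflTransGen (rel F) (f 1) (f k) := key k hk le_rfl
  have := Relation.TransGen.head' (show rel F (f 0) (f 1) from harc 0 hk) h1
  rwa [← hcyc] at this
end ForestAux

namespace ForestAux
variable {n : ℕ} {ε : Fin n → Fin n → ℝ}

lemma forest_pos {F : Finset (Fin n × Fin n)} (hF : IsOutForest ε F) {u v : Fin n}
    (h : (u, v) ∈ F) : 0 < ε u v := hF.1 (u, v) h

lemma forest_unique {F : Finset (Fin n × Fin n)} (hF : IsOutForest ε F) {u u' v : Fin n}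
    (h : (u, v) ∈ F) (h' : (u', v) ∈ F) : u = u' := hF.2.1 u u' v h h'

lemma forest_noTransCycle {F : Finset (Fin n × Fin n)} (hF : IsOutForest ε F) (a : Fin n) :
    ¬ Relation.TransGen (rel F) a a := by
  intro h
  obtain ⟨k, f, hk, hf0, hfk, harc⟩ := transGen_to_cycle h
  exact hF.2.2 ⟨k, f, hk, by rw [hf0, hfk], harc⟩

lemma noCycle_of_noTransCycle {F : Finset (Fin n × Fin n)}
    (h : ∀ a, ¬ Relation.TransGen (rel F) a a) :
    ¬ ∃ (k : ℕ) (f : ℕ → Fin n), 0 < k ∧ f 0 = f k ∧ ∀ i < k, (f i, f (i + 1)) ∈ F := by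
  rintro ⟨k, f, hk, hcyc, harc⟩
  exact h (f 0) (cycle_to_transGen hk hcyc harc)

lemma forest_subset {F G : Finset (Fin n × Fin n)} (hF : IsOutForest ε F) (h : G ⊆ F) :
    IsOutForest ε G := by
  refine ⟨fun p hp => hF.1 p (h hp), fun u u' v hu hu' => hF.2.1 u u' v (h hu) (h hu'), ?_⟩
  exact noCycle_of_noTransCycle fun a ha => forest_noTransCycle hF a (transGen_mono h ha)

lemma forest_no_loop {F : Finset (Fin n × Fin n)} (hF : IsOutForest ε F)
    (hdiag : ∀ i, ε i i = 0) (a : Fin n) : (a, a) ∉ F := fun h => by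
  have := forest_pos hF h; rw [hdiag] at this; exact lt_irrefl 0 this

lemma weight_pos {F : Finset (Fin n × Fin n)} (hF : IsOutForest ε F) :
    0 < forestWeight ε F :=
  Finset.prod_pos fun p hp => hF.1 p hp

lemma last_arc {F : Finset (Fin n × Fin n)} {j i : Fin n} (h : Reach F j i) (hne : j ≠ i) :
    ∃ m, (m, i) ∈ F ∧ Reach F j m := by
  rcases Relation.ReflTransGen.cases_tail h with he | ⟨c, hc, hci⟩
  · exact absurd he.symm hne
  · exact ⟨c, hci, hc⟩

/-- Ancestors of a common vertex are comparable in a forest. -/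
lemma reach_comparable {F : Finset (Fin n × Fin n)} (hF : IsOutForest ε F) {a b c : Fin n}
    (hac : Reach F a c) (hbc : Reach F b c) : Reach F a b ∨ Reach F b a := by
  induction hac using Relation.ReflTransGen.head_induction_on with
  | refl => exact Or.inr hbc
  | head hax hx ih =>
    rename_i a' x
    rcases ih with h1 | h1
    · exact Or.inl (Relation.ReflTransGen.head hax h1)
    · rcases Relation.ReflTransGen.cases_tail h1 with he | ⟨c', hc', hcx⟩
      · subst he
        exact Or.inl (Relation.ReflTransGen.single hax)
      · have : c' = a' := forest_unique hF hcx hax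
        subst this
        exact Or.inr hc'

/-- If `j` is a root and both `i` and `j` reach `m`, then `j` reaches `i`. -/
lemma root_reach {F : Finset (Fin n × Fin n)} (hF : IsOutForest ε F) {j i m : Fin n}
    (hroot : ∀ u, (u, j) ∉ F) (him : Reach F i m) (hjm : Reach F j m) : Reach F j i := by
  rcases reach_comparable hF him hjm with h | h
  · rcases Relation.ReflTransGen.cases_tail h with he | ⟨c, _, hcj⟩
    · exact he ▸ Relation.ReflTransGen.refl
    · exact absurd hcj (hroot c)
  · exact h

end ForestAux

namespace ForestAux
variable {n : ℕ} {ε : Fin n → Fin n → ℝ}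

/-- the (unique) in-neighbour of `v`, if any -/
noncomputable def par (F : Finset (Fin n × Fin n)) (v : Fin n) : Fin n :=
  if h : ∃ u, (u, v) ∈ F then h.choose else v

lemma par_mem {F : Finset (Fin n × Fin n)} {v : Fin n} (h : ∃ u, (u, v) ∈ F) :
    (par F v, v) ∈ F := by
  rw [par, dif_pos h]; exact h.choose_spec

lemma par_eq {F : Finset (Fin n × Fin n)} (hF : IsOutForest ε F) {u v : Fin n}
    (h : (u, v) ∈ F) : par F v = u :=
  forest_unique hF (par_mem ⟨u, h⟩) h

/-- Inserting a new arc `(m,i)` into a forest where `i` has no in-arc and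
`i` cannot reach `m` yields a forest. -/
lemma forest_insert {E : Finset (Fin n × Fin n)} {m i : Fin n} (hE : IsOutForest ε E)
    (hno : ∀ u, (u, i) ∉ E) (hpos : 0 < ε m i) (hnr : ¬ Reach E i m) :
    IsOutForest ε (insert (m, i) E) := by
  have hnm : (m, i) ∉ E := hno m
  have herase : (insert (m, i) E).erase (m, i) = E := Finset.erase_insert hnm
  refine ⟨?_, ?_, ?_⟩
  · rintro ⟨u, v⟩ hp
    rcases Finset.mem_insert.1 hp with he | he
    · obtain ⟨rfl, rfl⟩ := Prod.ext_iff.mp he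
      exact hpos
    · exact hE.1 _ he
  · intro u u' v hu hu'
    rcases Finset.mem_insert.1 hu with he | he <;> rcases Finset.mem_insert.1 hu' with he' | he'
    · exact (Prod.ext_iff.mp he).1.trans (Prod.ext_iff.mp he').1.symm
    · obtain ⟨rfl, rfl⟩ := Prod.ext_iff.mp he
      exact absurd he' (hno u')
    · obtain ⟨rfl, rfl⟩ := Prod.ext_iff.mp he'
      exact absurd he (hno u)
    · exact hE.2.1 u u' v he he'
  · apply noCycle_of_noTransCycle
    intro a ha
    rcases transGen_erase_or (p := m) (q := i) ha with h1 | ⟨h1, h2⟩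
    · rw [herase] at h1
      exact forest_noTransCycle hE a h1
    · rw [herase] at h1
      rcases reach_erase_or (p := m) (q := i) h2 with h3 | ⟨h3, _⟩ <;> rw [herase] at h3
      · exact hnr (h3.trans h1)
      · exact hnr h3

lemma root_erase {F : Finset (Fin n × Fin n)} (hF : IsOutForest ε F) {m i : Fin n}
    (hmem : (m, i) ∈ F) (u : Fin n) : (u, i) ∉ F.erase (m, i) := by
  intro h
  have := forest_unique hF (Finset.mem_of_mem_erase h) hmem
  subst this
  exact (Finset.mem_erase.1 h).1 rfl

/-- A walk to the tail of an arc `(m,i)` can avoid that arc. -/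
lemma reach_tail_erase {F : Finset (Fin n × Fin n)} {m i a : Fin n}
    (h : Reach F a m) : Reach (F.erase (m, i)) a m := by
  rcases reach_erase_or (p := m) (q := i) h with h1 | ⟨h1, _⟩ <;> exact h1

end ForestAux

namespace ForestAux
variable {n : ℕ}

noncomputable def Fk (ε : Fin n → Fin n → ℝ) (k : ℕ) : Finset (Finset (Fin n × Fin n)) :=
  @Finset.filter _ (fun F => IsOutForest ε F ∧ F.card = k) (Classical.decPred _) Finset.univ

lemma mem_Fk {ε : Fin n → Fin n → ℝ} {k : ℕ} {F : Finset (Fin n × Fin n)} :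
    F ∈ Fk ε k ↔ IsOutForest ε F ∧ F.card = k := by
  simp [Fk, Finset.mem_filter]

noncomputable def Qs (ε : Fin n → Fin n → ℝ) (k : ℕ) (i j : Fin n) :
    Finset (Finset (Fin n × Fin n)) :=
  @Finset.filter _
    (fun F => IsOutForest ε F ∧ F.card = k ∧ (∀ u, (u, j) ∉ F) ∧ Reach F j i)
    (Classical.decPred _) Finset.univ

lemma mem_Qs {ε : Fin n → Fin n → ℝ} {k : ℕ} {i j : Fin n} {F : Finset (Fin n × Fin n)} :
    F ∈ Qs ε k i j ↔
      IsOutForest ε F ∧ F.card = k ∧ (∀ u, (u, j) ∉ F) ∧ Reach F j i := by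
  simp [Qs, Finset.mem_filter]

lemma sigmaW_eq (ε : Fin n → Fin n → ℝ) (k : ℕ) :
    sigmaW ε k = ∑ F ∈ Fk ε k, forestWeight ε F := by
  rw [sigmaW]
  have h : {F : Finset (Fin n × Fin n) | IsOutForest ε F ∧ F.card = k} = ↑(Fk ε k) := by
    ext F; simp [mem_Fk]
  rw [h, finsum_mem_coe_finset]

lemma QMat_eq (ε : Fin n → Fin n → ℝ) (k : ℕ) (i j : Fin n) :
    QMat ε k i j = ∑ F ∈ Qs ε k i j, forestWeight ε F := by
  show ∑ᶠ F ∈ _, _ = _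
  have h : {F : Finset (Fin n × Fin n) | IsOutForest ε F ∧ F.card = k ∧
      (∀ u, (u, j) ∉ F) ∧ Relation.ReflTransGen (fun a b => (a, b) ∈ F) j i} =
      ↑(Qs ε k i j) := by
    ext F; simp [mem_Qs]; tauto
  rw [h, finsum_mem_coe_finset]

lemma forest_empty (ε : Fin n → Fin n → ℝ) : IsOutForest ε (∅ : Finset (Fin n × Fin n)) := by
  refine ⟨by simp, by simp, ?_⟩
  rintro ⟨k, f, hk, -, harc⟩
  simpa using harc 0 hk

lemma reach_empty {a b : Fin n} (h : Reach (∅ : Finset (Fin n × Fin n)) a b) : a = b := by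
  rcases Relation.ReflTransGen.cases_head h with he | ⟨c, hc, -⟩
  · exact he
  · simp [rel] at hc

lemma QMat_zero (ε : Fin n → Fin n → ℝ) : QMat ε 0 = (1 : Matrix (Fin n) (Fin n) ℝ) := by
  ext i j
  rw [QMat_eq, Matrix.one_apply]
  by_cases hij : i = j
  · subst hij
    have : Qs ε 0 i i = {∅} := by
      ext F
      simp only [mem_Qs, Finset.mem_singleton, Finset.card_eq_zero]
      constructor
      · rintro ⟨-, rfl, -, -⟩; rfl
      · rintro rfl
        exact ⟨forest_empty ε, rfl, by simp, Relation.ReflTransGen.refl⟩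
    simp [this, forestWeight]
  · have : Qs ε 0 i j = ∅ := by
      ext F
      simp only [mem_Qs, Finset.notMem_empty, iff_false, not_and]
      rintro - hc - h
      obtain rfl : F = ∅ := Finset.card_eq_zero.mp hc
      exact hij (reach_empty h).symm
    simp [this, hij]

lemma card_roots {ε : Fin n → Fin n → ℝ} {F : Finset (Fin n × Fin n)} {k : ℕ}
    [DecidablePred (fun i : Fin n => ∀ u, (u, i) ∉ F)]
    (hF : IsOutForest ε F) (hcard : F.card = k) :
    k ≤ n ∧
      (Finset.univ.filter (fun i => ∀ u, (u, i) ∉ F)).card = n - k := by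
  classical
  have himg : (F.image Prod.snd).card = k := by
    rw [Finset.card_image_of_injOn, hcard]
    rintro ⟨u, v⟩ hu ⟨u', v'⟩ hu' (he : v = v')
    subst he
    have := hF.2.1 u u' v hu hu'
    simp [this]
  have hkn : k ≤ n := by
    calc k = (F.image Prod.snd).card := himg.symm
    _ ≤ Finset.univ.card := Finset.card_le_card (Finset.subset_univ _)
    _ = n := by simp
  refine ⟨hkn, ?_⟩
  have hset : (Finset.univ.filter (fun i => ∀ u, (u, i) ∉ F))
      = Finset.univ \ F.image Prod.snd := by
    ext i
    rw [Finset.mem_filter, Finset.mem_sdiff]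
    simp only [Finset.mem_univ, true_and]
    rw [Finset.mem_image]
    constructor
    · rintro h ⟨⟨u, v⟩, hu, hv⟩
      exact h u (show (u, i) ∈ F by cases hv; exact hu)
    · exact fun h u hu => h ⟨(u, i), hu, rfl⟩
  rw [hset, Finset.card_sdiff_of_subset (Finset.subset_univ _), himg]
  simp

lemma trace_eq (ε : Fin n → Fin n → ℝ) (k : ℕ) :
    (QMat ε k).trace = ((n : ℝ) - k) * sigmaW ε k := by
  classical
  rw [Matrix.trace, sigmaW_eq]
  have h1 : ∀ i : Fin n, (QMat ε k).diag i =
      ∑ F ∈ Fk ε k, (if (∀ u, (u, i) ∉ F) then forestWeight ε F else 0) := by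
    intro i
    rw [Matrix.diag, QMat_eq]
    rw [show Qs ε k i i = (Fk ε k).filter (fun F => ∀ u, (u, i) ∉ F) by
      ext F
      simp only [mem_Qs, Finset.mem_filter, mem_Fk]
      constructor
      · rintro ⟨h1, h2, h3, -⟩; exact ⟨⟨h1, h2⟩, h3⟩
      · rintro ⟨⟨h1, h2⟩, h3⟩; exact ⟨h1, h2, h3, Relation.ReflTransGen.refl⟩]
    rw [Finset.sum_filter]
  rw [Finset.sum_congr rfl (fun i _ => h1 i), Finset.sum_comm, Finset.mul_sum]
  refine Finset.sum_congr rfl ?_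
  intro F hF
  rw [mem_Fk] at hF
  obtain ⟨hkn, hcnt⟩ := card_roots hF.1 hF.2
  rw [← Finset.sum_filter, Finset.sum_const, hcnt, nsmul_eq_mul]
  congr 1
  push_cast [hkn]
  ring

end ForestAux

namespace ForestAux
variable {n : ℕ} {ε : Fin n → Fin n → ℝ}

noncomputable def PAIR (P : Fin n × Finset (Fin n × Fin n) → Prop) :
    Finset (Fin n × Finset (Fin n × Fin n)) :=
  @Finset.filter _ P (Classical.decPred _) Finset.univ

lemma mem_PAIR {P : Fin n × Finset (Fin n × Fin n) → Prop}
    {p : Fin n × Finset (Fin n × Fin n)} : p ∈ PAIR P ↔ P p := by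
  simp [PAIR]

lemma PAIR_congr {P P' : Fin n × Finset (Fin n × Fin n) → Prop}
    (h : ∀ p, P p ↔ P' p) : PAIR P = PAIR P' := by
  ext p; rw [mem_PAIR, mem_PAIR, h]

lemma PAIR_empty {P : Fin n × Finset (Fin n × Fin n) → Prop}
    (h : ∀ p, ¬ P p) : PAIR P = ∅ := by
  ext p; simp [mem_PAIR, h]

lemma PAIR_filter {P q : Fin n × Finset (Fin n × Fin n) → Prop}
    [DecidablePred q] :
    (PAIR P).filter q = PAIR (fun p => P p ∧ q p) := by
  ext p; simp [mem_PAIR, Finset.mem_filter]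

lemma sum_PAIR {P : Fin n × Finset (Fin n × Fin n) → Prop}
    {QQ : Fin n → Finset (Finset (Fin n × Fin n))}
    (h : ∀ m F, F ∈ QQ m ↔ P (m, F)) (f : Fin n → Finset (Fin n × Fin n) → ℝ) :
    ∑ p ∈ PAIR P, f p.1 p.2 = ∑ m ∈ Finset.univ, ∑ F ∈ QQ m, f m F :=
  Finset.sum_finset_product' _ _ _ (by simp [mem_PAIR, h])

/-- Core surgery lemma: swapping the in-arc `(p,i)` of `i` for a new arc `(m,i)`. -/
lemma swap_core (hdiag : ∀ a, ε a a = 0) {F : Finset (Fin n × Fin n)} {m i j p : Fin n}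
    (hF : IsOutForest ε F) (hpi : (p, i) ∈ F) (hpos : 0 < ε m i)
    (hroot : ∀ u, (u, j) ∉ F) (hnrim : ¬ Reach F i m) (hij : i ≠ j) (hmp : m ≠ p) :
    IsOutForest ε (insert (m, i) (F.erase (p, i))) ∧
      (insert (m, i) (F.erase (p, i))).card = F.card ∧
      (∀ u, (u, j) ∉ insert (m, i) (F.erase (p, i))) ∧
      par (insert (m, i) (F.erase (p, i))) i = m ∧
      insert (p, i) ((insert (m, i) (F.erase (p, i))).erase (m, i)) = F ∧
      ε p i * forestWeight ε (insert (m, i) (F.erase (p, i))) =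
        ε m i * forestWeight ε F := by
  have hmiF : (m, i) ∉ F := fun h => hmp (forest_unique hF h hpi)
  have hE : IsOutForest ε (F.erase (p, i)) := forest_subset hF (Finset.erase_subset _ _)
  have hno : ∀ u, (u, i) ∉ F.erase (p, i) := root_erase hF hpi
  have hnr : ¬ Reach (F.erase (p, i)) i m := fun h =>
    hnrim (reach_mono (Finset.erase_subset _ _) h)
  have hmiE : (m, i) ∉ F.erase (p, i) := hno m
  have hforest : IsOutForest ε (insert (m, i) (F.erase (p, i))) :=
    forest_insert hE hno hpos hnr
  have herase : (insert (m, i) (F.erase (p, i))).erase (m, i) = F.erase (p, i) :=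
    Finset.erase_insert hmiE
  refine ⟨hforest, ?_, ?_, ?_, ?_, ?_⟩
  · rw [Finset.card_insert_of_notMem hmiE, Finset.card_erase_of_mem hpi]
    have : 1 ≤ F.card := Finset.card_pos.2 ⟨_, hpi⟩
    omega
  · intro u hu
    rcases Finset.mem_insert.1 hu with he | he
    · exact hij (Prod.ext_iff.mp he).2.symm
    · exact hroot u (Finset.mem_of_mem_erase he)
  · exact par_eq hforest (Finset.mem_insert_self _ _)
  · rw [herase, Finset.insert_erase hpi]
  · have h1 : forestWeight ε (insert (m, i) (F.erase (p, i)))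
        = ε m i * forestWeight ε (F.erase (p, i)) := by
      simp only [forestWeight]
      exact Finset.prod_insert (f := fun q => ε q.1 q.2) hmiE
    have h2 : ε p i * forestWeight ε (F.erase (p, i)) = forestWeight ε F := by
      simp only [forestWeight]
      exact Finset.mul_prod_erase F (fun q => ε q.1 q.2) hpi
    rw [h1, ← h2]; ring

end ForestAux

namespace ForestAux
variable {n : ℕ} {ε : Fin n → Fin n → ℝ}

lemma weight_insert {F : Finset (Fin n × Fin n)} {m i : Fin n} (h : (m, i) ∉ F) :
    forestWeight ε (insert (m, i) F) = ε m i * forestWeight ε F := by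
  simp only [forestWeight]
  exact Finset.prod_insert (f := fun q => ε q.1 q.2) h

/-- Bijection for the diagonal case: pairs `(m,F)` with `j` a root not reaching `m`
correspond to `(k+1)`-arc forests in which `j` is not a root. -/
lemma sum_neg_root (hdiag : ∀ a, ε a a = 0) (k : ℕ) (j : Fin n)
    {P : Fin n × Finset (Fin n × Fin n) → Prop}
    (hP : ∀ m F, P (m, F) ↔ (m ≠ j ∧ 0 < ε m j ∧ IsOutForest ε F ∧ F.card = k ∧
      (∀ u, (u, j) ∉ F) ∧ ¬ Reach F j m))
    {t : Finset (Finset (Fin n × Fin n))}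
    (ht : ∀ F, F ∈ t ↔ (IsOutForest ε F ∧ F.card = k + 1 ∧ ¬ ∀ u, (u, j) ∉ F)) :
    ∑ p ∈ PAIR P, ε p.1 j * forestWeight ε p.2 = ∑ F ∈ t, forestWeight ε F := by
  refine Finset.sum_nbij' (fun p => insert (p.1, j) p.2)
    (fun F => (par F j, F.erase (par F j, j))) ?_ ?_ ?_ ?_ ?_
  · rintro ⟨m, F⟩ ha
    obtain ⟨hm, hpos, hF, hcard, hroot, hnr⟩ := (hP m F).1 (mem_PAIR.1 ha)
    refine (ht _).2 ⟨forest_insert hF hroot hpos hnr, ?_, ?_⟩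
    · rw [Finset.card_insert_of_notMem (hroot m), hcard]
    · intro hall
      exact hall m (Finset.mem_insert_self _ _)
  · intro F' ha
    obtain ⟨hF', hcard', hnroot⟩ := (ht F').1 ha
    have hex : ∃ u, (u, j) ∈ F' := by push_neg at hnroot; exact hnroot
    have hpj : (par F' j, j) ∈ F' := par_mem hex
    refine mem_PAIR.2 ((hP _ _).2 ⟨?_, forest_pos hF' hpj, ?_, ?_, root_erase hF' hpj, ?_⟩)
    · intro he
      rw [he] at hpj
      exact forest_no_loop hF' hdiag j hpj
    · exact forest_subset hF' (Finset.erase_subset _ _)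
    · rw [Finset.card_erase_of_mem hpj, hcard']
      omega
    · intro h
      have h1 : Reach F' j (par F' j) := reach_mono (Finset.erase_subset _ _) h
      exact forest_noTransCycle hF' j (Relation.TransGen.tail' h1 hpj)
  · rintro ⟨m, F⟩ ha
    obtain ⟨hm, hpos, hF, hcard, hroot, hnr⟩ := (hP m F).1 (mem_PAIR.1 ha)
    have hforest' := forest_insert hF hroot hpos hnr
    have hpar : par (insert (m, j) F) j = m := par_eq hforest' (Finset.mem_insert_self _ _)
    simp only [hpar]
    rw [Finset.erase_insert (hroot m)]
  · intro F' ha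
    obtain ⟨-, -, hnroot⟩ := (ht F').1 ha
    have hex : ∃ u, (u, j) ∈ F' := by push_neg at hnroot; exact hnroot
    exact Finset.insert_erase (par_mem hex)
  · rintro ⟨m, F⟩ ha
    obtain ⟨-, -, -, -, hroot, -⟩ := (hP m F).1 (mem_PAIR.1 ha)
    exact (weight_insert (hroot m)).symm

/-- Bijection for the good off-diagonal pairs: they correspond to the forests
counted by `Q_{k+1}(i,j)`. -/
lemma sum_good (hdiag : ∀ a, ε a a = 0) (k : ℕ) (i j : Fin n) (hij : i ≠ j)
    {P : Fin n × Finset (Fin n × Fin n) → Prop}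
    (hP : ∀ m F, P (m, F) ↔ (m ≠ i ∧ 0 < ε m i ∧ IsOutForest ε F ∧ F.card = k ∧
      (∀ u, (u, j) ∉ F) ∧ Reach F j m ∧ ¬ Reach F j i ∧ ∀ u, (u, i) ∉ F)) :
    ∑ p ∈ PAIR P, ε p.1 i * forestWeight ε p.2 =
      ∑ F ∈ Qs ε (k + 1) i j, forestWeight ε F := by
  refine Finset.sum_nbij' (fun p => insert (p.1, i) p.2)
    (fun F => (par F i, F.erase (par F i, i))) ?_ ?_ ?_ ?_ ?_
  · rintro ⟨m, F⟩ ha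
    obtain ⟨hm, hpos, hF, hcard, hroot, hrm, hnri, hnoi⟩ := (hP m F).1 (mem_PAIR.1 ha)
    have hnrim : ¬ Reach F i m := fun h => hnri (root_reach hF hroot h hrm)
    refine mem_Qs.2 ⟨forest_insert hF hnoi hpos hnrim, ?_, ?_, ?_⟩
    · rw [Finset.card_insert_of_notMem (hnoi m), hcard]
    · intro u hu
      rcases Finset.mem_insert.1 hu with he | he
      · exact hij (Prod.ext_iff.mp he).2.symm
      · exact hroot u he
    · exact (reach_mono (Finset.subset_insert _ _) hrm).tail
        (show rel _ m i from Finset.mem_insert_self _ _)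
  · intro F' ha
    obtain ⟨hF', hcard', hroot', hri⟩ := mem_Qs.1 ha
    obtain ⟨u, hu, hrju⟩ := last_arc hri (Ne.symm hij)
    have hex : ∃ v, (v, i) ∈ F' := ⟨u, hu⟩
    have hpi : (par F' i, i) ∈ F' := par_mem hex
    have hrjp : Reach F' j (par F' i) := by rw [par_eq hF' hu]; exact hrju
    refine mem_PAIR.2 ((hP _ _).2 ⟨?_, forest_pos hF' hpi, ?_, ?_, ?_, ?_, ?_, ?_⟩)
    · intro he
      rw [he] at hpi
      exact forest_no_loop hF' hdiag i hpi
    · exact forest_subset hF' (Finset.erase_subset _ _)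
    · rw [Finset.card_erase_of_mem hpi, hcard']
      omega
    · exact fun v hv => hroot' v (Finset.mem_of_mem_erase hv)
    · exact reach_tail_erase hrjp
    · intro h
      obtain ⟨u', hu', -⟩ := last_arc h (Ne.symm hij)
      exact root_erase hF' hpi u' hu'
    · exact root_erase hF' hpi
  · rintro ⟨m, F⟩ ha
    obtain ⟨hm, hpos, hF, hcard, hroot, hrm, hnri, hnoi⟩ := (hP m F).1 (mem_PAIR.1 ha)
    have hnrim : ¬ Reach F i m := fun h => hnri (root_reach hF hroot h hrm)
    have hforest' := forest_insert hF hnoi hpos hnrim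
    have hpar : par (insert (m, i) F) i = m := par_eq hforest' (Finset.mem_insert_self _ _)
    simp only [hpar]
    rw [Finset.erase_insert (hnoi m)]
  · intro F' ha
    obtain ⟨hF', -, -, hri⟩ := mem_Qs.1 ha
    obtain ⟨u, hu, -⟩ := last_arc hri (Ne.symm hij)
    exact Finset.insert_erase (par_mem ⟨u, hu⟩)
  · rintro ⟨m, F⟩ ha
    obtain ⟨-, -, -, -, -, -, -, hnoi⟩ := (hP m F).1 (mem_PAIR.1 ha)
    exact (weight_insert (hnoi m)).symm

end ForestAux

namespace ForestAux
variable {n : ℕ} {ε : Fin n → Fin n → ℝ}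

/-- The parent-swapping involution: bad off-diagonal pairs correspond to the
pairs coming from the diagonal term. -/
lemma sum_bad (hdiag : ∀ a, ε a a = 0) (k : ℕ) (i j : Fin n) (hij : i ≠ j)
    {P Q : Fin n × Finset (Fin n × Fin n) → Prop}
    (hP : ∀ m F, P (m, F) ↔ (m ≠ i ∧ 0 < ε m i ∧ IsOutForest ε F ∧ F.card = k ∧
      (∀ u, (u, j) ∉ F) ∧ Reach F j m ∧ ¬ Reach F j i ∧ ¬ ∀ u, (u, i) ∉ F))
    (hQ : ∀ m F, Q (m, F) ↔ (m ≠ i ∧ 0 < ε m i ∧ IsOutForest ε F ∧ F.card = k ∧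
      (∀ u, (u, j) ∉ F) ∧ Reach F j i ∧ ¬ Reach F j m)) :
    ∑ p ∈ PAIR P, ε p.1 i * forestWeight ε p.2 =
      ∑ p ∈ PAIR Q, ε p.1 i * forestWeight ε p.2 := by
  -- data extracted from a P-pair
  have keyP : ∀ m F, P (m, F) →
      (par F i, i) ∈ F ∧ ¬ Reach F i m ∧ m ≠ par F i := by
    intro m F hp
    obtain ⟨hm, hpos, hF, hcard, hroot, hrm, hnri, hin⟩ := (hP m F).1 hp
    have hex : ∃ u, (u, i) ∈ F := by push_neg at hin; exact hin
    have hpi : (par F i, i) ∈ F := par_mem hex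
    have hnrim : ¬ Reach F i m := fun h => hnri (root_reach hF hroot h hrm)
    refine ⟨hpi, hnrim, ?_⟩
    intro he
    rw [he] at hrm
    exact hnri (hrm.tail hpi)
  -- data extracted from a Q-pair
  have keyQ : ∀ m F, Q (m, F) →
      (par F i, i) ∈ F ∧ Reach F j (par F i) ∧ ¬ Reach F i m ∧ m ≠ par F i := by
    intro m F hq
    obtain ⟨hm, hpos, hF, hcard, hroot, hri, hnrm⟩ := (hQ m F).1 hq
    obtain ⟨u, hu, hrju⟩ := last_arc hri (Ne.symm hij)
    have hpi : (par F i, i) ∈ F := par_mem ⟨u, hu⟩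
    have hrjp : Reach F j (par F i) := by rw [par_eq hF hu]; exact hrju
    have hnrim : ¬ Reach F i m := fun h => hnrm (hri.trans h)
    exact ⟨hpi, hrjp, hnrim, fun he => hnrm (he ▸ hrjp)⟩
  refine Finset.sum_nbij'
    (fun p => (par p.2 i, insert (p.1, i) (p.2.erase (par p.2 i, i))))
    (fun p => (par p.2 i, insert (p.1, i) (p.2.erase (par p.2 i, i)))) ?_ ?_ ?_ ?_ ?_
  · rintro ⟨m, F⟩ ha
    have hp := mem_PAIR.1 ha
    obtain ⟨hm, hpos, hF, hcard, hroot, hrm, hnri, hin⟩ := (hP m F).1 hp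
    obtain ⟨hpi, hnrim, hmp⟩ := keyP m F hp
    obtain ⟨hforest, hcardeq, hrootnew, hparnew, hback, hweight⟩ :=
      swap_core hdiag hF hpi hpos hroot hnrim hij hmp
    set p := par F i with hpdef
    set Ft := insert (m, i) (F.erase (p, i)) with hFt
    have hmiF : (m, i) ∉ F := fun h => hmp (forest_unique hF h hpi)
    have hmiE : (m, i) ∉ F.erase (p, i) := fun h => hmiF (Finset.mem_of_mem_erase h)
    have herase : Ft.erase (m, i) = F.erase (p, i) := Finset.erase_insert hmiE
    refine mem_PAIR.2 ((hQ _ _).2 ⟨?_, forest_pos hF hpi, hforest,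
      hcardeq.trans hcard, hrootnew, ?_, ?_⟩)
    · intro he
      have he' : p = i := he
      rw [he'] at hpi
      exact forest_no_loop hF hdiag i hpi
    · -- Reach Ft j i
      rcases reach_erase_or (p := p) (q := i) hrm with h1 | ⟨-, h2⟩
      · exact (reach_mono (Finset.subset_insert _ _) h1).tail
          (show rel _ m i from Finset.mem_insert_self _ _)
      · exact absurd h2 hnrim
    · -- ¬ Reach Ft j p
      intro h
      rcases reach_erase_or (p := m) (q := i) h with h1 | ⟨-, h2⟩
      · rw [herase] at h1
        exact hnri ((reach_mono (Finset.erase_subset _ _) h1).tail hpi)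
      · rcases reach_erase_or (p := m) (q := i) h2 with h3 | ⟨h3, -⟩ <;> rw [herase] at h3
        · exact forest_noTransCycle hF i
            (Relation.TransGen.tail' (reach_mono (Finset.erase_subset _ _) h3) hpi)
        · exact hnrim (reach_mono (Finset.erase_subset _ _) h3)
  · rintro ⟨m, F⟩ ha
    have hq := mem_PAIR.1 ha
    obtain ⟨hm, hpos, hF, hcard, hroot, hri, hnrm⟩ := (hQ m F).1 hq
    obtain ⟨hpi, hrjp, hnrim, hmp⟩ := keyQ m F hq
    obtain ⟨hforest, hcardeq, hrootnew, hparnew, hback, hweight⟩ :=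
      swap_core hdiag hF hpi hpos hroot hnrim hij hmp
    set p := par F i with hpdef
    set Ft := insert (m, i) (F.erase (p, i)) with hFt
    have hmiF : (m, i) ∉ F := fun h => hmp (forest_unique hF h hpi)
    have hmiE : (m, i) ∉ F.erase (p, i) := fun h => hmiF (Finset.mem_of_mem_erase h)
    have herase : Ft.erase (m, i) = F.erase (p, i) := Finset.erase_insert hmiE
    have hnrtm : ¬ Reach Ft j m := by
      intro h
      rcases reach_erase_or (p := m) (q := i) h with h1 | ⟨h1, -⟩ <;> rw [herase] at h1
      · exact hnrm (reach_mono (Finset.erase_subset _ _) h1)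
      · exact hnrm (reach_mono (Finset.erase_subset _ _) h1)
    refine mem_PAIR.2 ((hP _ _).2 ⟨?_, forest_pos hF hpi, hforest,
      hcardeq.trans hcard, hrootnew, ?_, ?_, ?_⟩)
    · intro he
      have he' : p = i := he
      rw [he'] at hpi
      exact forest_no_loop hF hdiag i hpi
    · -- Reach Ft j p
      rcases reach_erase_or (p := p) (q := i) hrjp with h1 | ⟨h1, -⟩ <;>
        exact reach_mono (Finset.subset_insert _ _) h1
    · -- ¬ Reach Ft j i
      intro h
      obtain ⟨u', hu', hru'⟩ := last_arc h (Ne.symm hij)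
      have : u' = m := by
        rcases Finset.mem_insert.1 hu' with he | he
        · exact (Prod.ext_iff.mp he).1
        · exact absurd he (fun hmem => root_erase hF hpi u' hmem)
      rw [this] at hru'
      exact hnrtm hru'
    · intro hall
      exact hall m (Finset.mem_insert_self _ _)
  · rintro ⟨m, F⟩ ha
    have hp := mem_PAIR.1 ha
    obtain ⟨hm, hpos, hF, hcard, hroot, hrm, hnri, hin⟩ := (hP m F).1 hp
    obtain ⟨hpi, hnrim, hmp⟩ := keyP m F hp
    obtain ⟨hforest, hcardeq, hrootnew, hparnew, hback, hweight⟩ :=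
      swap_core hdiag hF hpi hpos hroot hnrim hij hmp
    simp only [hparnew]
    rw [hback]
  · rintro ⟨m, F⟩ ha
    have hq := mem_PAIR.1 ha
    obtain ⟨hm, hpos, hF, hcard, hroot, hri, hnrm⟩ := (hQ m F).1 hq
    obtain ⟨hpi, hrjp, hnrim, hmp⟩ := keyQ m F hq
    obtain ⟨hforest, hcardeq, hrootnew, hparnew, hback, hweight⟩ :=
      swap_core hdiag hF hpi hpos hroot hnrim hij hmp
    simp only [hparnew]
    rw [hback]
  · rintro ⟨m, F⟩ ha
    have hp := mem_PAIR.1 ha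
    obtain ⟨hm, hpos, hF, hcard, hroot, hrm, hnri, hin⟩ := (hP m F).1 hp
    obtain ⟨hpi, hnrim, hmp⟩ := keyP m F hp
    obtain ⟨hforest, hcardeq, hrootnew, hparnew, hback, hweight⟩ :=
      swap_core hdiag hF hpi hpos hroot hnrim hij hmp
    exact hweight.symm

end ForestAux

namespace ForestAux
variable {n : ℕ} {ε : Fin n → Fin n → ℝ}

lemma main_entry (hnonneg : ∀ a b, 0 ≤ ε a b) (hdiag : ∀ a, ε a a = 0)
    (k : ℕ) (i j : Fin n) :
    (kirchhoff ε * QMat ε k) i j =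
      sigmaW ε (k + 1) * (if i = j then 1 else 0) - QMat ε (k + 1) i j := by
  classical
  -- Step A : expand the matrix product
  have hfil : Finset.univ.filter (· ≠ i) = Finset.univ.erase i := by
    ext m; simp [Finset.mem_erase, and_comm]
  have hL : (kirchhoff ε * QMat ε k) i j =
      (∑ m ∈ Finset.univ.erase i, ε m i * QMat ε k i j)
        - ∑ m ∈ Finset.univ.erase i, ε m i * QMat ε k m j := by
    rw [Matrix.mul_apply, ← Finset.add_sum_erase Finset.univ _ (Finset.mem_univ i)]
    have h1 : kirchhoff ε i i = ∑ m ∈ Finset.univ.erase i, ε m i := by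
      show (if i = i then ∑ m ∈ Finset.univ.filter (· ≠ i), ε m i else -(ε i i)) = _
      rw [if_pos rfl, hfil]
    have h2 : ∀ m ∈ Finset.univ.erase i, kirchhoff ε i m * QMat ε k m j
        = -(ε m i * QMat ε k m j) := by
      intro m hm
      have hne : i ≠ m := Ne.symm (Finset.mem_erase.1 hm).1
      show (if i = m then ∑ u ∈ Finset.univ.filter (· ≠ i), ε u i else -(ε m i)) * _ = _
      rw [if_neg hne]; ring
    rw [Finset.sum_congr rfl h2, h1, Finset.sum_mul]
    rw [Finset.sum_neg_distrib]
    ring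
  -- Step B : pair sums
  set Poff : Fin n × Finset (Fin n × Fin n) → Prop := fun p =>
    p.1 ≠ i ∧ 0 < ε p.1 i ∧ IsOutForest ε p.2 ∧ p.2.card = k ∧
      (∀ u, (u, j) ∉ p.2) ∧ Reach p.2 j p.1 with hPoffdef
  set Pdiag : Fin n × Finset (Fin n × Fin n) → Prop := fun p =>
    p.1 ≠ i ∧ 0 < ε p.1 i ∧ IsOutForest ε p.2 ∧ p.2.card = k ∧
      (∀ u, (u, j) ∉ p.2) ∧ Reach p.2 j i with hPdiagdef
  have hgen : ∀ (QQ : Fin n → Finset (Finset (Fin n × Fin n)))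
      (G : Fin n → ℝ),
      (∀ m, m ≠ i → 0 < ε m i → (∑ F ∈ QQ m, forestWeight ε F) = G m) →
      (∀ m, ¬ (m ≠ i ∧ 0 < ε m i) → QQ m = ∅) →
      (∑ m ∈ Finset.univ, ∑ F ∈ QQ m, ε m i * forestWeight ε F)
        = ∑ m ∈ Finset.univ.erase i, ε m i * G m := by
    intro QQ G h1 h2
    rw [← Finset.add_sum_erase Finset.univ _ (Finset.mem_univ i)]
    rw [h2 i (by simp), Finset.sum_empty, zero_add]
    refine Finset.sum_congr rfl ?_
    intro m hm
    have hmi : m ≠ i := (Finset.mem_erase.1 hm).1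
    by_cases hpos : 0 < ε m i
    · rw [← h1 m hmi hpos, Finset.mul_sum]
    · have hz : ε m i = 0 := le_antisymm (not_lt.mp hpos) (hnonneg m i)
      rw [h2 m (by tauto), Finset.sum_empty, hz, zero_mul]
  have hBoff : ∑ m ∈ Finset.univ.erase i, ε m i * QMat ε k m j
      = ∑ p ∈ PAIR Poff, ε p.1 i * forestWeight ε p.2 := by
    rw [sum_PAIR (QQ := fun m => if m ≠ i ∧ 0 < ε m i then Qs ε k m j else ∅)
      (fun m F => by
        show (F ∈ if m ≠ i ∧ 0 < ε m i then Qs ε k m j else ∅) ↔ Poff (m, F)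
        by_cases h : m ≠ i ∧ 0 < ε m i
        · rw [if_pos h, mem_Qs, hPoffdef]
          constructor
          · rintro ⟨h1, h2, h3, h4⟩; exact ⟨h.1, h.2, h1, h2, h3, h4⟩
          · rintro ⟨-, -, h1, h2, h3, h4⟩; exact ⟨h1, h2, h3, h4⟩
        · rw [if_neg h]
          simp only [Finset.notMem_empty, false_iff, hPoffdef]
          rintro ⟨h1, h2, -⟩; exact h ⟨h1, h2⟩)
      (fun m F => ε m i * forestWeight ε F)]
    rw [hgen _ (fun m => QMat ε k m j)
      (fun m hmi hpos => by
        show (∑ F ∈ (if m ≠ i ∧ 0 < ε m i then Qs ε k m j else ∅), forestWeight ε F)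
          = QMat ε k m j
        rw [if_pos ⟨hmi, hpos⟩, QMat_eq])
      (fun m hm => by
        show (if m ≠ i ∧ 0 < ε m i then Qs ε k m j else ∅) = ∅
        rw [if_neg hm])]
  have hBdiag : ∑ m ∈ Finset.univ.erase i, ε m i * QMat ε k i j
      = ∑ p ∈ PAIR Pdiag, ε p.1 i * forestWeight ε p.2 := by
    rw [sum_PAIR (QQ := fun m => if m ≠ i ∧ 0 < ε m i then Qs ε k i j else ∅)
      (fun m F => by
        show (F ∈ if m ≠ i ∧ 0 < ε m i then Qs ε k i j else ∅) ↔ Pdiag (m, F)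
        by_cases h : m ≠ i ∧ 0 < ε m i
        · rw [if_pos h, mem_Qs, hPdiagdef]
          constructor
          · rintro ⟨h1, h2, h3, h4⟩; exact ⟨h.1, h.2, h1, h2, h3, h4⟩
          · rintro ⟨-, -, h1, h2, h3, h4⟩; exact ⟨h1, h2, h3, h4⟩
        · rw [if_neg h]
          simp only [Finset.notMem_empty, false_iff, hPdiagdef]
          rintro ⟨h1, h2, -⟩; exact h ⟨h1, h2⟩)
      (fun m F => ε m i * forestWeight ε F)]
    rw [hgen _ (fun _ => QMat ε k i j)
      (fun m hmi hpos => by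
        show (∑ F ∈ (if m ≠ i ∧ 0 < ε m i then Qs ε k i j else ∅), forestWeight ε F)
          = QMat ε k i j
        rw [if_pos ⟨hmi, hpos⟩, QMat_eq])
      (fun m hm => by
        show (if m ≠ i ∧ 0 < ε m i then Qs ε k i j else ∅) = ∅
        rw [if_neg hm])]
  -- Step C : split the sums
  have hsplitOff : ∑ p ∈ PAIR Poff, ε p.1 i * forestWeight ε p.2
      = (∑ p ∈ PAIR (fun p => Poff p ∧ Reach p.2 j i), ε p.1 i * forestWeight ε p.2)
        + ∑ p ∈ PAIR (fun p => Poff p ∧ ¬ Reach p.2 j i), ε p.1 i * forestWeight ε p.2 := by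
    rw [← Finset.sum_filter_add_sum_filter_not (PAIR Poff) (fun p => Reach p.2 j i),
      PAIR_filter, PAIR_filter]
  have hsplitDiag : ∑ p ∈ PAIR Pdiag, ε p.1 i * forestWeight ε p.2
      = (∑ p ∈ PAIR (fun p => Poff p ∧ Reach p.2 j i), ε p.1 i * forestWeight ε p.2)
        + ∑ p ∈ PAIR (fun p => Pdiag p ∧ ¬ Reach p.2 j p.1), ε p.1 i * forestWeight ε p.2 := by
    rw [← Finset.sum_filter_add_sum_filter_not (PAIR Pdiag) (fun p => Reach p.2 j p.1),
      PAIR_filter, PAIR_filter]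
    congr 1
    rw [PAIR_congr (P' := fun p => Poff p ∧ Reach p.2 j i)
      (fun p => by rw [hPoffdef, hPdiagdef]; tauto)]
  rw [hL, hBoff, hBdiag, hsplitOff, hsplitDiag]
  set Sneg := ∑ p ∈ PAIR (fun p => Pdiag p ∧ ¬ Reach p.2 j p.1),
    ε p.1 i * forestWeight ε p.2 with hSneg
  set Spos := ∑ p ∈ PAIR (fun p => Poff p ∧ ¬ Reach p.2 j i),
    ε p.1 i * forestWeight ε p.2 with hSpos
  have hgoal : Sneg - Spos = sigmaW ε (k + 1) * (if i = j then 1 else 0)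
      - QMat ε (k + 1) i j := by
    by_cases hij : i = j
    · subst hij
      rw [if_pos rfl]
      have hposz : Spos = 0 := by
        rw [hSpos, PAIR_empty (fun p hp => hp.2 Relation.ReflTransGen.refl),
          Finset.sum_empty]
      have hnegval : Sneg = ∑ F ∈ (Fk ε (k + 1)).filter (fun F => ¬ ∀ u, (u, i) ∉ F),
          forestWeight ε F := by
        rw [hSneg]
        refine sum_neg_root hdiag k i ?_ ?_
        · intro m F
          rw [hPdiagdef]
          constructor
          · rintro ⟨⟨h1, h2, h3, h4, h5, -⟩, h6⟩; exact ⟨h1, h2, h3, h4, h5, h6⟩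
          · rintro ⟨h1, h2, h3, h4, h5, h6⟩
            exact ⟨⟨h1, h2, h3, h4, h5, Relation.ReflTransGen.refl⟩, h6⟩
        · intro F
          rw [Finset.mem_filter, mem_Fk]; tauto
      have hsig : sigmaW ε (k + 1)
          = (∑ F ∈ (Fk ε (k + 1)).filter (fun F => ∀ u, (u, i) ∉ F), forestWeight ε F)
            + ∑ F ∈ (Fk ε (k + 1)).filter (fun F => ¬ ∀ u, (u, i) ∉ F), forestWeight ε F := by
        rw [sigmaW_eq, ← Finset.sum_filter_add_sum_filter_not (Fk ε (k + 1))
          (fun F => ∀ u, (u, i) ∉ F)]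
      have hQ : QMat ε (k + 1) i i
          = ∑ F ∈ (Fk ε (k + 1)).filter (fun F => ∀ u, (u, i) ∉ F), forestWeight ε F := by
        rw [QMat_eq]
        congr 1
        ext F
        rw [mem_Qs, Finset.mem_filter, mem_Fk]
        constructor
        · rintro ⟨h1, h2, h3, -⟩; exact ⟨⟨h1, h2⟩, h3⟩
        · rintro ⟨⟨h1, h2⟩, h3⟩; exact ⟨h1, h2, h3, Relation.ReflTransGen.refl⟩
      rw [hposz, hnegval, hsig, hQ]; ring
    · rw [if_neg hij]
      -- split Spos into good and bad parts
      have hsplitPos : Spos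
          = (∑ p ∈ PAIR (fun p => (Poff p ∧ ¬ Reach p.2 j i) ∧ ∀ u, (u, i) ∉ p.2),
              ε p.1 i * forestWeight ε p.2)
            + ∑ p ∈ PAIR (fun p => (Poff p ∧ ¬ Reach p.2 j i) ∧ ¬ ∀ u, (u, i) ∉ p.2),
              ε p.1 i * forestWeight ε p.2 := by
        rw [hSpos, ← Finset.sum_filter_add_sum_filter_not
          (PAIR (fun p => Poff p ∧ ¬ Reach p.2 j i)) (fun p => ∀ u, (u, i) ∉ p.2),
          PAIR_filter, PAIR_filter]
      have hgood : ∑ p ∈ PAIR (fun p => (Poff p ∧ ¬ Reach p.2 j i) ∧ ∀ u, (u, i) ∉ p.2),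
          ε p.1 i * forestWeight ε p.2 = QMat ε (k + 1) i j := by
        rw [QMat_eq]
        refine sum_good hdiag k i j hij ?_
        intro m F
        rw [hPoffdef]; tauto
      have hbad : ∑ p ∈ PAIR (fun p => (Poff p ∧ ¬ Reach p.2 j i) ∧ ¬ ∀ u, (u, i) ∉ p.2),
          ε p.1 i * forestWeight ε p.2 = Sneg := by
        rw [hSneg]
        refine sum_bad hdiag k i j hij ?_ ?_
        · intro m F; rw [hPoffdef]; tauto
        · intro m F; rw [hPdiagdef]; tauto
      rw [hsplitPos, hgood, hbad]; ring
  linarith [hgoal]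

end ForestAux

namespace ForestAux
variable {n : ℕ} {ε : Fin n → Fin n → ℝ}

lemma trace_LQ (hnonneg : ∀ a b, 0 ≤ ε a b) (hdiag : ∀ a, ε a a = 0) (k : ℕ) :
    (kirchhoff ε * QMat ε k).trace = ((k : ℝ) + 1) * sigmaW ε (k + 1) := by
  have h : ∀ i, (kirchhoff ε * QMat ε k) i i
      = sigmaW ε (k + 1) - QMat ε (k + 1) i i := by
    intro i
    have h1 := main_entry hnonneg hdiag k i i
    rw [if_pos rfl, mul_one] at h1
    exact h1
  rw [Matrix.trace]
  have hdg : ∀ i ∈ Finset.univ, (kirchhoff ε * QMat ε k).diag i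
      = sigmaW ε (k + 1) - QMat ε (k + 1) i i := fun i _ => h i
  rw [Finset.sum_congr rfl hdg, Finset.sum_sub_distrib, Finset.sum_const,
    Finset.card_univ, Fintype.card_fin]
  have htr : ∑ i, QMat ε (k + 1) i i = (QMat ε (k + 1)).trace := rfl
  rw [htr, trace_eq ε (k + 1), nsmul_eq_mul]
  push_cast
  ring

end ForestAux



/-- `tr(Q_k) = (n−k)σ_k`, `σ_{k+1} = tr(L·Q_k)/(k+1)`, the recurrence
`Q_{k+1} = (tr(L·Q_k)/(k+1))·I − L·Q_k`, and the starting point `Q_0 = I`. -/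
theorem QMat_trace_recurrence (n : ℕ) (hn : 1 < n) (ε : Fin n → Fin n → ℝ)
    (hnonneg : ∀ i j, 0 ≤ ε i j) (hdiag : ∀ i, ε i i = 0) :
    QMat ε 0 = (1 : Matrix (Fin n) (Fin n) ℝ) ∧
    ∀ k : ℕ, k ≤ maxForestCard ε →
      (QMat ε k).trace = ((n : ℝ) - k) * sigmaW ε k ∧
      sigmaW ε (k + 1) = (kirchhoff ε * QMat ε k).trace / (k + 1) ∧
      QMat ε (k + 1) = ((kirchhoff ε * QMat ε k).trace / (k + 1)) •
          (1 : Matrix (Fin n) (Fin n) ℝ) - kirchhoff ε * QMat ε k := by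
  constructor
  · exact ForestAux.QMat_zero ε
  · intro k _
    have htr := ForestAux.trace_LQ hnonneg hdiag k
    have hk1 : ((k : ℝ) + 1) ≠ 0 := by positivity
    have hσ : (kirchhoff ε * QMat ε k).trace / (((k : ℕ) : ℝ) + 1) = sigmaW ε (k + 1) := by
      rw [htr]
      field_simp
    refine ⟨ForestAux.trace_eq ε k, ?_, ?_⟩
    · rw [htr]
      push_cast
      field_simp
    · ext i j
      rw [Matrix.sub_apply, Matrix.smul_apply, Matrix.one_apply, smul_eq_mul]
      rw [ForestAux.main_entry hnonneg hdiag k i j]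
      push_cast
      rw [hσ]
      ring
end

section
/- For every weighted digraph and every k with 0 ≤ k ≤ n−v, the matrix L·Q_k is the Kirchhoff matrix of some weighted digraph; explicitly, all off-diagonal entries of L·Q_k are nonpositive, all diagonal entries are nonnegative, and every row sum of L·Q_k equals 0. -/
/-!
Expanding `L = diag(column sums of ε) - εᵀ` gives
`(L * A) i j = ∑ u, ε u i * (A i j - A u j)` for every matrix `A`. Each vertex lies in exactly
one tree of an out forest, so every row of `Q_k` sums to `σ_k`, and `L * Q_k` has zero row sums.
For `i ≠ j` the pairs `(u, F)` weighted by `ε u i * ε(F)` that are counted by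
`∑ u, ε u i * Q_k i j` inject, preserving weight, into those counted by `∑ u, ε u i * Q_k u j`:
keep `(u, F)` if `u` lies below `i` in `F`; otherwise replace the arc `q → i` of `F` by `u → i`,
which keeps `F` an out forest rooted at `j` with `q` in `j`'s tree, and send it to `(q, F')`.
So the off-diagonal entries of `L * Q_k` are nonpositive, and a matrix with nonpositive
off-diagonal entries and zero row sums is the Kirchhoff matrix of its negated off-diagonal part.
-/

open Matrix BigOperators Filter

open Relation Finset

namespace Relation

variable {α : Type*} {r : α → α → Prop}

theorem reflTransGen_of_chain (f : ℕ → α) :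
    ∀ k, (∀ i < k, r (f i) (f (i + 1))) → ReflTransGen r (f 0) (f k)
  | 0, _ => .refl
  | k + 1, h => (reflTransGen_of_chain f k fun i hi => h i (by omega)).tail (h k (by omega))

theorem exists_chain_of_reflTransGen {a b : α} (h : ReflTransGen r a b) :
    ∃ k, ∃ f : ℕ → α, f 0 = a ∧ f k = b ∧ ∀ i < k, r (f i) (f (i + 1)) := by
  induction h using ReflTransGen.head_induction_on with
  | refl => exact ⟨0, fun _ => b, rfl, rfl, by omega⟩
  | @head a c hac _ ih =>
    obtain ⟨k, f, hf0, hfk, hf⟩ := ih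
    refine ⟨k + 1, fun | 0 => a | i + 1 => f i, rfl, hfk, ?_⟩
    rintro (_ | i) hi
    · simpa [hf0] using hac
    · exact hf i (by omega)

theorem exists_cycle_iff :
    (∃ (k : ℕ) (f : ℕ → α), 0 < k ∧ f 0 = f k ∧ ∀ i < k, r (f i) (f (i + 1))) ↔
      ∃ a b, r a b ∧ ReflTransGen r b a := by
  constructor
  · rintro ⟨k, f, hk, hcyc, hf⟩
    refine ⟨f 0, f 1, hf 0 hk, ?_⟩
    have := reflTransGen_of_chain (fun i => f (i + 1)) (k - 1) fun i hi => hf (i + 1) (by omega)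
    simpa [Nat.sub_add_cancel hk, ← hcyc] using this
  · rintro ⟨a, b, hab, hba⟩
    obtain ⟨k, f, hf0, hfk, hf⟩ := exists_chain_of_reflTransGen hba
    refine ⟨k + 1, fun | 0 => a | i + 1 => f i, k.succ_pos, hfk.symm, ?_⟩
    rintro (_ | i) hi
    · simpa [hf0] using hab
    · exact hf i (by omega)

end Relation

theorem Finset.sum_le_sum_of_injOn {ι κ M : Type*} [AddCommMonoid M] [Preorder M]
    [AddLeftMono M] {s : Finset ι} {t : Finset κ} {f : ι → M} {g : κ → M} (e : ι → κ)
    (he : Set.InjOn e s) (hest : Set.MapsTo e s t) (hg : ∀ j ∈ t, 0 ≤ g j)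
    (h : ∀ i ∈ s, f i = g (e i)) : ∑ i ∈ s, f i ≤ ∑ j ∈ t, g j := by
  classical
  rw [sum_congr rfl h, ← sum_image he]
  exact sum_le_sum_of_subset_of_nonneg (image_subset_iff.2 hest) fun j hj _ => hg j hj

section Reaches

variable {α : Type*}

abbrev Reaches (F : Finset (α × α)) : α → α → Prop :=
  ReflTransGen fun a b => (a, b) ∈ F

variable {F F' : Finset (α × α)} {i j m q x y : α}

theorem eq_of_reaches_of_forall_notMem (h : Reaches F x j) (hj : ∀ u, (u, j) ∉ F) : x = j := by
  rcases h.cases_tail with rfl | ⟨c, -, hc⟩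
  · rfl
  · exact absurd hc (hj c)

theorem root_unique (hin : ∀ u u' v, (u, v) ∈ F → (u', v) ∈ F → u = u')
    {j j' : α} (hj : ∀ u, (u, j) ∉ F) (hj' : ∀ u, (u, j') ∉ F)
    (h : Reaches F j x) (h' : Reaches F j' x) : j = j' := by
  induction h generalizing j' with
  | refl => exact (eq_of_reaches_of_forall_notMem h' hj).symm
  | @tail c y _ hcy ih =>
    rcases h'.cases_tail with rfl | ⟨c', hc', hc'y⟩
    · exact absurd hcy (hj' c)
    · exact ih hj' (hin c' c y hc'y hcy ▸ hc')

variable [DecidableEq α]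

theorem Reaches.of_subset_insert (hs : F' ⊆ insert (m, i) F) (h : Reaches F' x y) :
    Reaches F x y ∨ Reaches F x m ∧ Reaches F' i y := by
  induction h using ReflTransGen.head_induction_on with
  | refl => exact .inl .refl
  | @head a c hac hcy ih =>
    rcases mem_insert.1 (hs hac) with hmi | hF
    · obtain ⟨rfl, rfl⟩ := Prod.mk.inj hmi
      exact .inr ⟨.refl, hcy⟩
    · exact ih.imp (·.head hF) (And.imp_left (·.head hF))

namespace Finset

def reparent (F : Finset (α × α)) (i q m : α) : Finset (α × α) :=
  insert (m, i) (F.erase (q, i))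

theorem reparent_subset_insert : F.reparent i q m ⊆ insert (m, i) F :=
  insert_subset_insert _ (erase_subset _ _)

theorem subset_insert_reparent : F ⊆ insert (q, i) (F.reparent i q m) := by
  intro p hp
  by_cases hpq : p = (q, i)
  · exact hpq ▸ mem_insert_self _ _
  · exact mem_insert_of_mem (mem_insert_of_mem (mem_erase.2 ⟨hpq, hp⟩))

theorem forall_notMem_reparent (hj : ∀ u, (u, j) ∉ F) (hij : i ≠ j) :
    ∀ u, (u, j) ∉ F.reparent i q m := by
  intro u hu
  rcases mem_insert.1 hu with h | h
  · exact hij (Prod.mk.inj h).2.symm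
  · exact hj u (mem_of_mem_erase h)

end Finset

theorem Reaches.of_reparent (hm : ¬ Reaches F i m) (h : Reaches (F.reparent i q m) i y) :
    Reaches F i y :=
  (h.of_subset_insert reparent_subset_insert).resolve_right fun h' => hm h'.1

theorem Reaches.reparent_of_reaches_parent (h : Reaches F x q) :
    Reaches (F.reparent i q m) x q :=
  (h.of_subset_insert subset_insert_reparent).elim id And.left

end Reaches

section OutForest

variable {n : ℕ} {ε : Fin n → Fin n → ℝ} {F : Finset (Fin n × Fin n)} {i q m x : Fin n}

theorem isOutForest_iff : IsOutForest ε F ↔ (∀ p ∈ F, 0 < ε p.1 p.2) ∧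
    (∀ u u' v, (u, v) ∈ F → (u', v) ∈ F → u = u') ∧
    ∀ a b, (a, b) ∈ F → ¬ Reaches F b a := by
  rw [IsOutForest, exists_cycle_iff (r := fun a b => (a, b) ∈ F)]
  simp only [not_exists, not_and]

namespace IsOutForest

variable (hF : IsOutForest ε F)
include hF

theorem eq_of_mem {u u' v : Fin n} (hu : (u, v) ∈ F) (hu' : (u', v) ∈ F) : u = u' :=
  hF.2.1 u u' v hu hu'

theorem not_reaches {a b : Fin n} (hab : (a, b) ∈ F) : ¬ Reaches F b a :=
  (isOutForest_iff.1 hF).2.2 a b hab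

theorem exists_root (x : Fin n) : ∃ j, (∀ u, (u, j) ∉ F) ∧ Reaches F j x := by
  have : Std.Irrefl (TransGen fun a b => (a, b) ∈ F) :=
    ⟨fun a h => by obtain ⟨b, hab, hba⟩ := TransGen.head'_iff.1 h; exact hF.not_reaches hab hba⟩
  obtain ⟨j, hj, hmin⟩ :=
    (Finite.wellFounded_of_trans_of_irrefl (TransGen fun a b => (a, b) ∈ F)).has_min
    {y | Reaches F y x} ⟨x, .refl⟩
  exact ⟨j, fun u hu => hmin u (hj.head hu) (.single hu), hj⟩

theorem existsUnique_root (x : Fin n) : ∃! j, (∀ u, (u, j) ∉ F) ∧ Reaches F j x := by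
  obtain ⟨j, hj, hjx⟩ := hF.exists_root x
  exact ⟨j, ⟨hj, hjx⟩, fun j' ⟨hj', hj'x⟩ => root_unique hF.2.1 hj' hj hj'x hjx⟩

theorem notMem_erase_of_mem (hq : (q, i) ∈ F) (m : Fin n) : (m, i) ∉ F.erase (q, i) :=
  fun h => ne_of_mem_erase h (by rw [hF.eq_of_mem (mem_of_mem_erase h) hq])

theorem reparent (hq : (q, i) ∈ F) (hm : 0 < ε m i) (hmi : ¬ Reaches F i m) :
    IsOutForest ε (F.reparent i q m) := by
  have hin (u) (hu : (u, i) ∈ F.reparent i q m) : u = m :=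
    (Prod.mk.inj ((mem_insert.1 hu).resolve_right (hF.notMem_erase_of_mem hq u))).1
  refine isOutForest_iff.2 ⟨?_, ?_, ?_⟩
  · intro p hp
    rcases mem_insert.1 hp with rfl | h
    · exact hm
    · exact hF.1 p (mem_of_mem_erase h)
  · intro u u' v hu hu'
    by_cases hv : v = i
    · subst hv
      rw [hin u hu, hin u' hu']
    · have mem_F {w} (hw : (w, v) ∈ F.reparent i q m) : (w, v) ∈ F :=
        mem_of_mem_erase ((mem_insert.1 hw).resolve_left fun h => hv (Prod.mk.inj h).2)
      exact hF.eq_of_mem (mem_F hu) (mem_F hu')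
  · intro a b hab hba
    rcases mem_insert.1 hab with h | h
    · obtain ⟨rfl, rfl⟩ := Prod.mk.inj h
      exact hmi (hba.of_reparent hmi)
    · rcases hba.of_subset_insert reparent_subset_insert with hba' | ⟨hbm, hia⟩
      · exact hF.not_reaches (mem_of_mem_erase h) hba'
      · exact hmi (((hia.of_reparent hmi).tail (mem_of_mem_erase h)).trans hbm)

theorem card_reparent (hq : (q, i) ∈ F) : (F.reparent i q m).card = F.card := by
  rw [Finset.reparent, card_insert_of_notMem (hF.notMem_erase_of_mem hq m),
    card_erase_add_one hq]

theorem forestWeight_reparent (hq : (q, i) ∈ F) :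
    ε q i * forestWeight ε (F.reparent i q m) = ε m i * forestWeight ε F := by
  rw [forestWeight, forestWeight, Finset.reparent, prod_insert (hF.notMem_erase_of_mem hq m),
    mul_left_comm, mul_prod_erase F (fun p => ε p.1 p.2) hq]

theorem not_reaches_reparent (hq : (q, i) ∈ F) (hmi : ¬ Reaches F i m) :
    ¬ Reaches (F.reparent i q m) i q :=
  fun h => hF.not_reaches hq (h.of_reparent hmi)

theorem reparent_reparent (hq : (q, i) ∈ F) : (F.reparent i q m).reparent i m q = F := by
  rw [Finset.reparent, Finset.reparent, erase_insert (hF.notMem_erase_of_mem hq m),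
    insert_erase hq]

end IsOutForest

end OutForest

section Kirchhoff

variable {n : ℕ} (ε : Fin n → Fin n → ℝ)

theorem kirchhoff_apply_self (i : Fin n) : kirchhoff ε i i = ∑ u ∈ univ.erase i, ε u i := by
  rw [kirchhoff, of_apply, if_pos rfl, filter_ne']

theorem kirchhoff_apply_of_ne {i j : Fin n} (h : i ≠ j) : kirchhoff ε i j = -ε j i := by
  rw [kirchhoff, of_apply, if_neg h]

theorem kirchhoff_mul_apply (A : Matrix (Fin n) (Fin n) ℝ) (i j : Fin n) :
    (kirchhoff ε * A) i j = ∑ u, ε u i * (A i j - A u j) := by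
  have hi : ε i i * (A i j - A i j) = 0 := by rw [sub_self, mul_zero]
  rw [mul_apply, ← add_sum_erase _ _ (mem_univ i),
    ← sum_erase univ (f := fun u => ε u i * (A i j - A u j)) hi, kirchhoff_apply_self, sum_mul,
    ← sum_add_distrib]
  refine sum_congr rfl fun u hu => ?_
  rw [kirchhoff_apply_of_ne ε (ne_of_mem_erase hu).symm]
  ring

theorem sum_kirchhoff_mul_apply_eq_zero {A : Matrix (Fin n) (Fin n) ℝ}
    (hA : ∀ x y, ∑ j, A x j = ∑ j, A y j) (i : Fin n) : ∑ j, (kirchhoff ε * A) i j = 0 := by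
  simp_rw [kirchhoff_mul_apply]
  rw [sum_comm]
  exact sum_eq_zero fun u _ => by rw [← mul_sum, sum_sub_distrib, hA u i, sub_self, mul_zero]

end Kirchhoff

section ZeroRowSum

variable {n : ℕ} {M : Matrix (Fin n) (Fin n) ℝ}

theorem diag_eq_neg_sum_offDiag {i : Fin n} (hrow : ∑ j, M i j = 0) :
    M i i = -∑ j ∈ univ.erase i, M i j := by
  rw [← add_sum_erase _ _ (mem_univ i)] at hrow
  linarith

variable (hoff : ∀ i j, i ≠ j → M i j ≤ 0) (hrow : ∀ i, ∑ j, M i j = 0)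
include hoff hrow

theorem diag_nonneg_of_offDiag_nonpos (i : Fin n) : 0 ≤ M i i := by
  rw [diag_eq_neg_sum_offDiag (hrow i), neg_nonneg]
  exact sum_nonpos fun j hj => hoff i j (ne_of_mem_erase hj).symm

theorem exists_kirchhoff_eq_of_offDiag_nonpos :
    ∃ δ : Fin n → Fin n → ℝ, (∀ i j, 0 ≤ δ i j) ∧ (∀ i, δ i i = 0) ∧ kirchhoff δ = M := by
  refine ⟨fun a b => if a = b then 0 else -M b a, fun a b => ?_, fun a => if_pos rfl, ?_⟩
  · dsimp only
    split_ifs with hab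
    · rfl
    · exact neg_nonneg.2 (hoff b a (Ne.symm hab))
  · ext i j
    rcases eq_or_ne i j with rfl | hij
    · rw [kirchhoff_apply_self, diag_eq_neg_sum_offDiag (hrow i), ← sum_neg_distrib]
      exact sum_congr rfl fun u hu => if_neg (ne_of_mem_erase hu)
    · rw [kirchhoff_apply_of_ne _ hij, if_neg (Ne.symm hij), neg_neg]

end ZeroRowSum

section QMat

open scoped Classical

variable {n : ℕ} {ε : Fin n → Fin n → ℝ} {k : ℕ}

/-- `F` is one of the forests counted in the entry `QMat ε k x j`. -/
def IsQForest (ε : Fin n → Fin n → ℝ) (k : ℕ) (x j : Fin n) (F : Finset (Fin n × Fin n)) :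
    Prop :=
  IsOutForest ε F ∧ F.card = k ∧ (∀ u, (u, j) ∉ F) ∧ Reaches F j x

theorem QMat_apply (x j : Fin n) :
    QMat ε k x j = ∑ F with IsQForest ε k x j F, forestWeight ε F := by
  rw [QMat, of_apply, finsum_mem_eq_toFinset_sum, Set.toFinset_ofPred]
  congr

theorem sigmaW_eq_sum :
    sigmaW ε k = ∑ F with IsOutForest ε F ∧ F.card = k, forestWeight ε F := by
  rw [sigmaW, finsum_mem_eq_toFinset_sum, Set.toFinset_ofPred]

theorem sum_QMat_row (x : Fin n) : ∑ j, QMat ε k x j = sigmaW ε k := by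
  simp_rw [QMat_apply, sigmaW_eq_sum, sum_filter]
  rw [sum_comm]
  refine sum_congr rfl fun F _ => ?_
  by_cases hF : IsOutForest ε F ∧ F.card = k
  · obtain ⟨j, hj, huniq⟩ := hF.1.existsUnique_root x
    rw [if_pos hF, Fintype.sum_eq_single j, if_pos ⟨hF.1, hF.2, hj⟩]
    exact fun j' hj' => if_neg fun h => hj' (huniq j' h.2.2)
  · simp only [IsQForest, if_neg hF]
    exact sum_eq_zero fun j _ => if_neg fun h => hF ⟨h.1, h.2.1⟩

end QMat

section OffDiag

open scoped Classical

variable {n : ℕ} {ε : Fin n → Fin n → ℝ} {k : ℕ} {F : Finset (Fin n × Fin n)} {i j q u : Fin n}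

theorem forestWeight_nonneg (hε : ∀ a b, 0 ≤ ε a b) (F : Finset (Fin n × Fin n)) :
    0 ≤ forestWeight ε F :=
  prod_nonneg fun _ _ => hε _ _

theorem sum_mul_QMat_eq (g : Fin n → Fin n) :
    ∑ u, ε u i * QMat ε k (g u) j = ∑ p : Fin n × Finset (Fin n × Fin n)
      with IsQForest ε k (g p.1) j p.2, ε p.1 i * forestWeight ε p.2 := by
  rw [sum_filter, Fintype.sum_prod_type]
  refine sum_congr rfl fun u _ => ?_
  rw [QMat_apply, mul_sum, sum_filter]

theorem IsQForest.exists_parent (hF : IsQForest ε k i j F) (hij : i ≠ j) :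
    ∃ q, (q, i) ∈ F ∧ Reaches F j q := by
  rcases hF.2.2.2.cases_tail with rfl | ⟨q, hjq, hqi⟩
  · exact absurd rfl hij
  · exact ⟨q, hqi, hjq⟩

noncomputable def reattach (i : Fin n) (p : Fin n × Finset (Fin n × Fin n)) :
    Fin n × Finset (Fin n × Fin n) :=
  if h : ¬ Reaches p.2 i p.1 ∧ ∃ q, (q, i) ∈ p.2 then (h.2.choose, p.2.reparent i h.2.choose p.1)
  else p

theorem reattach_of_reaches (h : Reaches F i u) : reattach i (u, F) = (u, F) :=
  dif_neg fun h' => h'.1 h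

theorem IsOutForest.reattach_eq (hF : IsOutForest ε F) (hq : (q, i) ∈ F) (h : ¬ Reaches F i u) :
    reattach i (u, F) = (q, F.reparent i q u) := by
  have hex : ¬ Reaches F i u ∧ ∃ q, (q, i) ∈ F := ⟨h, q, hq⟩
  rw [reattach, dif_pos hex, hF.eq_of_mem hex.2.choose_spec hq]

theorem IsQForest.reattach (hF : IsQForest ε k i j F) (hij : i ≠ j) (hu : 0 < ε u i) :
    IsQForest ε k (reattach i (u, F)).1 j (reattach i (u, F)).2 ∧
      ε (reattach i (u, F)).1 i * forestWeight ε (reattach i (u, F)).2 =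
        ε u i * forestWeight ε F := by
  obtain ⟨hF, hcard, hj, hji⟩ := hF
  by_cases hiu : Reaches F i u
  · rw [reattach_of_reaches hiu]
    exact ⟨⟨hF, hcard, hj, hji.trans hiu⟩, rfl⟩
  · obtain ⟨q, hq, hjq⟩ := IsQForest.exists_parent ⟨hF, hcard, hj, hji⟩ hij
    rw [hF.reattach_eq hq hiu]
    exact ⟨⟨hF.reparent hq hu hiu, (hF.card_reparent hq).trans hcard,
      forall_notMem_reparent hj hij, hjq.reparent_of_reaches_parent⟩, hF.forestWeight_reparent hq⟩

theorem IsOutForest.reattach_ne (hF : IsOutForest ε F) (hq : (q, i) ∈ F) (hiu : ¬ Reaches F i u)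
    {F₁ : Finset (Fin n × Fin n)} {u₁ : Fin n} (h₁ : Reaches F₁ i u₁) :
    reattach i (u₁, F₁) ≠ reattach i (u, F) := by
  rw [reattach_of_reaches h₁, hF.reattach_eq hq hiu]
  intro h
  obtain ⟨rfl, rfl⟩ := Prod.mk.inj h
  exact hF.not_reaches_reparent hq hiu h₁

theorem reattach_injOn (hij : i ≠ j) :
    Set.InjOn (reattach i) {p | IsQForest ε k i j p.2 ∧ 0 < ε p.1 i} := by
  rintro ⟨u₁, F₁⟩ ⟨hF₁ : IsQForest ε k i j F₁, hu₁⟩ ⟨u₂, F₂⟩ ⟨hF₂ : IsQForest ε k i j F₂, hu₂⟩ he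
  obtain ⟨q₁, hq₁, -⟩ := hF₁.exists_parent hij
  obtain ⟨q₂, hq₂, -⟩ := hF₂.exists_parent hij
  by_cases r₁ : Reaches F₁ i u₁ <;> by_cases r₂ : Reaches F₂ i u₂
  · rwa [reattach_of_reaches r₁, reattach_of_reaches r₂] at he
  · exact absurd he (hF₂.1.reattach_ne hq₂ r₂ r₁)
  · exact absurd he.symm (hF₁.1.reattach_ne hq₁ r₁ r₂)
  · rw [hF₁.1.reattach_eq hq₁ r₁, hF₂.1.reattach_eq hq₂ r₂, Prod.mk.injEq] at he
    obtain ⟨rfl, hF'⟩ := he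
    have hu : u₁ = u₂ := (hF₂.1.reparent hq₂ hu₂ r₂).eq_of_mem (hF' ▸ mem_insert_self _ _)
      (mem_insert_self _ _)
    subst hu
    rw [← hF₁.1.reparent_reparent hq₁ (m := u₁), hF', hF₂.1.reparent_reparent hq₂]

theorem sum_mul_QMat_le (hε : ∀ a b, 0 ≤ ε a b) (hij : i ≠ j) :
    ∑ u, ε u i * QMat ε k i j ≤ ∑ u, ε u i * QMat ε k u j := by
  refine (sum_mul_QMat_eq (fun _ => i)).trans_le (le_of_le_of_eq ?_ (sum_mul_QMat_eq id).symm)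
  -- pairs with `ε u i = 0` contribute nothing and could not be reattached
  rw [← sum_filter_of_ne fun p _ hp => (hε p.1 i).lt_of_ne' (left_ne_zero_of_mul hp),
    filter_filter]
  refine sum_le_sum_of_injOn (reattach i)
    ((reattach_injOn hij).mono fun p hp => (mem_filter.1 hp).2) (fun p hp => ?_)
    (fun p _ => mul_nonneg (hε _ _) (forestWeight_nonneg hε _)) (fun p hp => ?_)
  all_goals obtain ⟨hF, hu⟩ := (mem_filter.1 hp).2
  · exact mem_filter.2 ⟨mem_univ _, (hF.reattach hij hu).1⟩
  · exact (hF.reattach hij hu).2.symm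

theorem kirchhoff_mul_QMat_apply_nonpos (hε : ∀ a b, 0 ≤ ε a b) (k : ℕ) (hij : i ≠ j) :
    (kirchhoff ε * QMat ε k) i j ≤ 0 := by
  simp_rw [kirchhoff_mul_apply, mul_sub]
  rw [sum_sub_distrib, sub_nonpos]
  exact sum_mul_QMat_le hε hij

end OffDiag

theorem kirchhoff_mul_QMat_is_kirchhoff_general (n : ℕ) (ε : Fin n → Fin n → ℝ)
    (hnonneg : ∀ i j, 0 ≤ ε i j) :
    ∀ k : ℕ, k ≤ maxForestCard ε →
      (∀ i j : Fin n, i ≠ j → (kirchhoff ε * QMat ε k) i j ≤ 0) ∧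
      (∀ i : Fin n, 0 ≤ (kirchhoff ε * QMat ε k) i i) ∧
      (∀ i : Fin n, ∑ j, (kirchhoff ε * QMat ε k) i j = 0) ∧
      (∃ δ : Fin n → Fin n → ℝ, (∀ i j, 0 ≤ δ i j) ∧ (∀ i, δ i i = 0) ∧
        kirchhoff δ = kirchhoff ε * QMat ε k) := by
  intro k _
  have hoff i j (hij : i ≠ j) := kirchhoff_mul_QMat_apply_nonpos hnonneg k hij
  have hrow := sum_kirchhoff_mul_apply_eq_zero ε (A := QMat ε k) fun x y => by
    rw [sum_QMat_row, sum_QMat_row]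
  exact ⟨hoff, diag_nonneg_of_offDiag_nonpos hoff hrow, hrow,
    exists_kirchhoff_eq_of_offDiag_nonpos hoff hrow⟩

/-- for `0 ≤ k ≤ n−v`, `L·Q_k` is the Kirchhoff matrix of some weighted
digraph: off-diagonal entries nonpositive, diagonal nonnegative, row sums zero. -/
theorem kirchhoff_mul_QMat_is_kirchhoff (n : ℕ) (hn : 1 < n) (ε : Fin n → Fin n → ℝ)
    (hnonneg : ∀ i j, 0 ≤ ε i j) (hdiag : ∀ i, ε i i = 0) :
    ∀ k : ℕ, k ≤ maxForestCard ε →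
      (∀ i j : Fin n, i ≠ j → (kirchhoff ε * QMat ε k) i j ≤ 0) ∧
      (∀ i : Fin n, 0 ≤ (kirchhoff ε * QMat ε k) i i) ∧
      (∀ i : Fin n, ∑ j, (kirchhoff ε * QMat ε k) i j = 0) ∧
      (∃ δ : Fin n → Fin n → ℝ, (∀ i j, 0 ≤ δ i j) ∧ (∀ i, δ i i = 0) ∧
        kirchhoff δ = kirchhoff ε * QMat ε k) :=
  kirchhoff_mul_QMat_is_kirchhoff_general n ε hnonneg
end
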